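/- arXiv:2304.11021 — 2 statements merged into one kernel-verified Lean document; each statement's English description precedes it below -/
import Mathlib

section
/- For the graph Γ(a,b,c,d): if c ≤ a+1 then Γ has avoidance index 1 (it is not doubly Eulerian). -/
open SimpleGraph

/-- Two closed walks from the same vertex are *avoiding* if at every intermediate
step their current vertices are distinct and non-adjacent. -/
def Avoiding {V : Type*} (G : SimpleGraph V) {u : V} (p q : G.Walk u u) : Prop :=
  ∀ i : ℕ, 0 < i → i < p.length →
    p.getVert i ≠ q.getVert i ∧ ¬ G.Adj (p.getVert i) (q.getVert i)

/-- A graph is *doubly Eulerian* if from every vertex there exist two avoiding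
Eulerian circuits. -/
def DoublyEulerian {V : Type*} [DecidableEq V] (G : SimpleGraph V) : Prop :=
  ∀ u : V, ∃ p q : G.Walk u u, p.IsEulerian ∧ q.IsEulerian ∧ Avoiding G p q


/-- The vertex set of the graph `Γ(a,b,c,d)`: the two degree-4 vertices together
with the internal vertices of the four paths `A`, `B`, `C`, `D`. -/
abbrev GammaV (a b c d : ℕ) : Type := Fin 2 ⊕ (Fin a ⊕ (Fin b ⊕ (Fin c ⊕ Fin d)))

/-- The relation describing a path from `u` to `v` whose internal vertices are
`f 0, f 1, …, f (k-1)`. -/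
def pathRel {V : Type*} (u v : V) {k : ℕ} (f : Fin k → V) (x y : V) : Prop :=
  (∃ i : Fin k, (i : ℕ) = 0 ∧ x = u ∧ y = f i) ∨
  (∃ i j : Fin k, (j : ℕ) = (i : ℕ) + 1 ∧ x = f i ∧ y = f j) ∨
  (∃ i : Fin k, (i : ℕ) = k - 1 ∧ x = f i ∧ y = v)

/-- The graph `Γ(a,b,c,d)`: two vertices `u = Sum.inl 0` and `v = Sum.inl 1` of
degree 4 joined by four internally disjoint paths `A`, `B`, `C`, `D` having
respectively `a`, `b`, `c`, `d` internal vertices of degree 2 (an empty path is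
replaced by the edge `u v`). -/
def Gamma (a b c d : ℕ) : SimpleGraph (GammaV a b c d) :=
  SimpleGraph.fromRel (fun x y =>
    (x = Sum.inl 0 ∧ y = Sum.inl 1 ∧ (a = 0 ∨ b = 0 ∨ c = 0 ∨ d = 0)) ∨
    pathRel (Sum.inl 0) (Sum.inl 1) (fun i : Fin a => Sum.inr (Sum.inl i)) x y ∨
    pathRel (Sum.inl 0) (Sum.inl 1) (fun i : Fin b => Sum.inr (Sum.inr (Sum.inl i))) x y ∨
    pathRel (Sum.inl 0) (Sum.inl 1) (fun i : Fin c => Sum.inr (Sum.inr (Sum.inr (Sum.inl i)))) x y ∨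
    pathRel (Sum.inl 0) (Sum.inl 1) (fun i : Fin d => Sum.inr (Sum.inr (Sum.inr (Sum.inr i)))) x y)


section WalkLemmas
variable {V : Type*} {G : SimpleGraph V}

lemma walk_edges_getElem? {u v : V} (p : G.Walk u v) (i : ℕ) (h : i < p.length) :
    p.edges[i]? = some s(p.getVert i, p.getVert (i + 1)) := by
  induction p generalizing i with
  | nil => simp at h
  | cons hadj q ih =>
    cases i with
    | zero => simp [Walk.getVert_zero, Walk.getVert_cons_succ]
    | succ j =>
      simp only [Walk.length_cons, Nat.succ_lt_succ_iff] at h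
      simpa [Walk.edges_cons, Walk.getVert_cons_succ] using ih j h

lemma trail_edge_index_inj {u v : V} {p : G.Walk u v} (hp : p.IsTrail) {i j : ℕ}
    (hi : i < p.length) (hj : j < p.length)
    (hij : s(p.getVert i, p.getVert (i+1)) = s(p.getVert j, p.getVert (j+1))) : i = j := by
  have h1 := walk_edges_getElem? p i hi
  have h2 := walk_edges_getElem? p j hj
  have hnd : p.edges.Nodup := hp.edges_nodup
  have hi' : i < p.edges.length := by rwa [Walk.length_edges]
  have hj' : j < p.edges.length := by rwa [Walk.length_edges]
  have : p.edges[i]? = p.edges[j]? := by rw [h1, h2, hij]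
  rw [List.getElem?_eq_getElem hi', List.getElem?_eq_getElem hj'] at this
  exact hnd.getElem_inj_iff.mp (Option.some.injEq _ _ ▸ this)

lemma trail_not_backtrack {u v : V} {p : G.Walk u v} (hp : p.IsTrail) {i : ℕ}
    (h1 : 1 ≤ i) (h2 : i < p.length) : p.getVert (i+1) ≠ p.getVert (i-1) := by
  intro h
  have hi' : i - 1 < p.length := by omega
  have : s(p.getVert i, p.getVert (i+1)) = s(p.getVert (i-1), p.getVert (i-1+1)) := by
    rw [h]
    have : i - 1 + 1 = i := by omega
    rw [this, Sym2.eq_swap]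
  have := trail_edge_index_inj hp h2 hi' this
  omega

lemma rev_one_ne {w : V} {p : G.Walk w w} (hp : p.IsTrail) (hl : 2 ≤ p.length) :
    p.reverse.getVert 1 ≠ p.getVert 1 := by
  intro h
  rw [Walk.getVert_reverse] at h
  have h0 : (0:ℕ) < p.length := by omega
  have hL : p.length - 1 < p.length := by omega
  have : s(p.getVert (p.length - 1), p.getVert (p.length - 1 + 1)) =
      s(p.getVert 0, p.getVert 1) := by
    have e1 : p.length - 1 + 1 = p.length := by omega
    rw [e1, Walk.getVert_length, Walk.getVert_zero, h, Sym2.eq_swap]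
  have := trail_edge_index_inj hp hL h0 this
  omega

/-- Degree-2 corridor propagation. -/
lemma corridor {w : V} {p : G.Walk w w} (hp : p.IsTrail) (t0 n : ℕ) (f : ℕ → V)
    (hn : 1 ≤ n)
    (h0 : p.getVert t0 = f 0) (h1 : p.getVert (t0+1) = f 1) (ht0 : t0 + 1 ≤ p.length)
    (hnb : ∀ k, 1 ≤ k → k < n → ∀ y, G.Adj (f k) y ↔ y = f (k-1) ∨ y = f (k+1))
    (hne : ∀ k, 1 ≤ k → k ≤ n → f k ≠ w) :
    t0 + n ≤ p.length ∧ ∀ k ≤ n, p.getVert (t0 + k) = f k := by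
  have main : ∀ k, 1 ≤ k → k ≤ n →
      t0 + k ≤ p.length ∧ p.getVert (t0+k) = f k ∧ p.getVert (t0+k-1) = f (k-1) := by
    intro k
    induction k with
    | zero => omega
    | succ m ih =>
      intro _ hm1
      rcases Nat.eq_zero_or_pos m with rfl | hm
      · exact ⟨ht0, by simpa using h1, by simpa using h0⟩
      · 
        obtain ⟨hlen, hgm, hgm1⟩ := ih hm (by omega)
        -- t0 + m < p.length since getVert (t0+m) = f m ≠ w = getVert p.length
        have hlt' : t0 + m < p.length := by
          rcases Nat.eq_or_lt_of_le hlen with he2 | h; swap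
          · exact h
          · exfalso
            apply hne m hm (by omega)
            rw [← hgm, he2, Walk.getVert_length]
        have hadj : G.Adj (p.getVert (t0+m)) (p.getVert (t0+m+1)) :=
          p.adj_getVert_succ hlt'
        rw [hgm, hnb m hm (by omega)] at hadj
        have hnb' : p.getVert (t0+m+1) ≠ p.getVert (t0+m-1) :=
          trail_not_backtrack hp (by omega) hlt'
        have : p.getVert (t0+m+1) = f (m+1) := by
          rcases hadj with h | h
          · exfalso; apply hnb'; rw [h, ← hgm1]
          · exact h
        refine ⟨by omega, this, ?_⟩
        simpa using hgm
  constructor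
  · exact (main n hn le_rfl).1
  · intro k hk
    rcases Nat.eq_zero_or_pos k with rfl | hk1
    · simpa using h0
    · exact (main k hk1 hk).2.1

lemma avoiding_symm {w : V} {p q : G.Walk w w} (hlen : p.length = q.length)
    (h : Avoiding G p q) : Avoiding G q p := by
  intro i h1 h2
  obtain ⟨hne, hna⟩ := h i h1 (by omega)
  exact ⟨hne.symm, fun hadj => hna hadj.symm⟩

lemma eulerian_length_eq [DecidableEq V] {w w' : V} {p : G.Walk w w} {q : G.Walk w' w'}
    (hp : p.IsEulerian) (hq : q.IsEulerian) : p.length = q.length := by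
  classical
  letI : Fintype G.edgeSet := hp.fintypeEdgeSet
  have h1 : p.length = hp.isTrail.edgesFinset.card := by
    rw [← Walk.length_edges]; rfl
  have h2 : q.length = hq.isTrail.edgesFinset.card := by
    rw [← Walk.length_edges]; rfl
  rw [h1, h2, hp.edgesFinset_eq, hq.edgesFinset_eq]

/-- The basic conflict: if both walks are at the same vertex at times differing by ≤ 1. -/
lemma conflict {w : V} {p q : G.Walk w w} (hlen : p.length = q.length)
    (hav : Avoiding G p q) {t1 t2 : ℕ} {x : V}
    (hp : p.getVert t1 = x) (hq : q.getVert t2 = x)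
    (h1 : 1 ≤ t1) (h2 : 1 ≤ t2) (h3 : t1 < p.length) (h4 : t2 < q.length)
    (hd : t1 ≤ t2 + 1 ∧ t2 ≤ t1 + 1) : False := by
  rcases Nat.lt_trichotomy t1 t2 with h | h | h
  · -- t2 = t1 + 1
    have ht2 : t2 = t1 + 1 := by omega
    obtain ⟨hne, hna⟩ := hav t1 h1 h3
    by_cases hx : q.getVert t1 = x
    · exact hne (hp.trans hx.symm)
    · have hadj : G.Adj (q.getVert t1) (q.getVert (t1+1)) :=
        q.adj_getVert_succ (by omega)
      rw [← ht2, hq] at hadj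
      exact hna (by rw [hp]; exact hadj.symm)
  · obtain ⟨hne, _⟩ := hav t1 h1 h3
    exact hne (by rw [hp, h, hq])
  · -- t1 = t2 + 1
    have ht1 : t1 = t2 + 1 := by omega
    obtain ⟨hne, hna⟩ := hav t2 h2 (by omega)
    by_cases hx : p.getVert t2 = x
    · exact hne (by rw [hx, hq])
    · have hadj : G.Adj (p.getVert t2) (p.getVert (t2+1)) :=
        p.adj_getVert_succ (by omega)
      rw [← ht1, hp] at hadj
      exact hna (by rw [hq]; exact hadj)

lemma length_pos_of_eulerian [DecidableEq V] {w x y : V} {p : G.Walk w w} (hp : p.IsEulerian)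
    (hadj : G.Adj x y) : 0 < p.length := by
  by_contra h
  have h0 : p.length = 0 := by omega
  have : p.edges = [] := by
    have := Walk.length_edges p
    rw [h0] at this
    exact List.length_eq_zero_iff.mp this
  have h2 := hp s(x,y) hadj
  rw [this] at h2
  simp at h2

end WalkLemmas

namespace GammaAux

variable (a b c d : ℕ)

def Ap (k : ℕ) : GammaV a b c d :=
  if h : 1 ≤ k ∧ k ≤ a then Sum.inr (Sum.inl ⟨k-1, by omega⟩)
  else if k = 0 then Sum.inl 0 else Sum.inl 1
def Bp (k : ℕ) : GammaV a b c d :=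
  if h : 1 ≤ k ∧ k ≤ b then Sum.inr (Sum.inr (Sum.inl ⟨k-1, by omega⟩))
  else if k = 0 then Sum.inl 0 else Sum.inl 1
def Cp (k : ℕ) : GammaV a b c d :=
  if h : 1 ≤ k ∧ k ≤ c then Sum.inr (Sum.inr (Sum.inr (Sum.inl ⟨k-1, by omega⟩)))
  else if k = 0 then Sum.inl 0 else Sum.inl 1
def Dp (k : ℕ) : GammaV a b c d :=
  if h : 1 ≤ k ∧ k ≤ d then Sum.inr (Sum.inr (Sum.inr (Sum.inr ⟨k-1, by omega⟩)))
  else if k = 0 then Sum.inl 0 else Sum.inl 1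

variable {a b c d}

lemma Ap_zero : Ap a b c d 0 = Sum.inl 0 := by simp [Ap]
lemma Bp_zero : Bp a b c d 0 = Sum.inl 0 := by simp [Bp]
lemma Cp_zero : Cp a b c d 0 = Sum.inl 0 := by simp [Cp]
lemma Dp_zero : Dp a b c d 0 = Sum.inl 0 := by simp [Dp]
lemma Ap_mid {k : ℕ} (h1 : 1 ≤ k) (h2 : k ≤ a) :
    Ap a b c d k = Sum.inr (Sum.inl ⟨k-1, by omega⟩) := dif_pos ⟨h1, h2⟩
lemma Bp_mid {k : ℕ} (h1 : 1 ≤ k) (h2 : k ≤ b) :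
    Bp a b c d k = Sum.inr (Sum.inr (Sum.inl ⟨k-1, by omega⟩)) := dif_pos ⟨h1, h2⟩
lemma Cp_mid {k : ℕ} (h1 : 1 ≤ k) (h2 : k ≤ c) :
    Cp a b c d k = Sum.inr (Sum.inr (Sum.inr (Sum.inl ⟨k-1, by omega⟩))) := dif_pos ⟨h1, h2⟩
lemma Dp_mid {k : ℕ} (h1 : 1 ≤ k) (h2 : k ≤ d) :
    Dp a b c d k = Sum.inr (Sum.inr (Sum.inr (Sum.inr ⟨k-1, by omega⟩))) := dif_pos ⟨h1, h2⟩
lemma Ap_big {k : ℕ} (h : a + 1 ≤ k) : Ap a b c d k = Sum.inl 1 := by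
  rw [Ap, dif_neg (by omega), if_neg (by omega)]
lemma Bp_big {k : ℕ} (h : b + 1 ≤ k) : Bp a b c d k = Sum.inl 1 := by
  rw [Bp, dif_neg (by omega), if_neg (by omega)]
lemma Cp_big {k : ℕ} (h : c + 1 ≤ k) : Cp a b c d k = Sum.inl 1 := by
  rw [Cp, dif_neg (by omega), if_neg (by omega)]
lemma Dp_big {k : ℕ} (h : d + 1 ≤ k) : Dp a b c d k = Sum.inl 1 := by
  rw [Dp, dif_neg (by omega), if_neg (by omega)]

lemma uv_ne : (Sum.inl 0 : GammaV a b c d) ≠ Sum.inl 1 := by simp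

/-- neighbours of u -/
lemma adj_u_iff (hab : a ≤ b) (hbc : b ≤ c) (hcd : c ≤ d) (y : GammaV a b c d) :
    (Gamma a b c d).Adj (Sum.inl 0) y ↔
      y = Ap a b c d 1 ∨ y = Bp a b c d 1 ∨ y = Cp a b c d 1 ∨ y = Dp a b c d 1 := by
  rw [Gamma, SimpleGraph.fromRel_adj]
  constructor
  · rintro ⟨hne, h | h⟩
    · rcases h with ⟨hx, hy, hz⟩ |
        (⟨i,hi,hx,hy⟩|⟨i,j,hj,hx,hy⟩|⟨i,hi,hx,hy⟩) |
        (⟨i,hi,hx,hy⟩|⟨i,j,hj,hx,hy⟩|⟨i,hi,hx,hy⟩) |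
        (⟨i,hi,hx,hy⟩|⟨i,j,hj,hx,hy⟩|⟨i,hi,hx,hy⟩) |
        (⟨i,hi,hx,hy⟩|⟨i,j,hj,hx,hy⟩|⟨i,hi,hx,hy⟩)
      · have ha : a = 0 := by omega
        exact Or.inl (by rw [hy, Ap_big (by omega)])
      · have := i.isLt
        refine Or.inl ?_
        rw [hy, Ap_mid le_rfl (by omega)]
        simp only [Sum.inr.injEq, Sum.inl.injEq, Fin.ext_iff]
        omega
      · exact absurd hx (by simp)
      · exact absurd hx (by simp)
      · have := i.isLt
        refine Or.inr (Or.inl ?_)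
        rw [hy, Bp_mid le_rfl (by omega)]
        simp only [Sum.inr.injEq, Sum.inl.injEq, Fin.ext_iff]
        omega
      · exact absurd hx (by simp)
      · exact absurd hx (by simp)
      · have := i.isLt
        refine Or.inr (Or.inr (Or.inl ?_))
        rw [hy, Cp_mid le_rfl (by omega)]
        simp only [Sum.inr.injEq, Sum.inl.injEq, Fin.ext_iff]
        omega
      · exact absurd hx (by simp)
      · exact absurd hx (by simp)
      · have := i.isLt
        refine Or.inr (Or.inr (Or.inr ?_))
        rw [hy, Dp_mid le_rfl (by omega)]
        simp only [Sum.inr.injEq, Sum.inl.injEq, Fin.ext_iff]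
        omega
      · exact absurd hx (by simp)
      · exact absurd hx (by simp)
    · rcases h with ⟨hy, hx, hz⟩ |
        (⟨i,hi,hy,hx⟩|⟨i,j,hj,hy,hx⟩|⟨i,hi,hy,hx⟩) |
        (⟨i,hi,hy,hx⟩|⟨i,j,hj,hy,hx⟩|⟨i,hi,hy,hx⟩) |
        (⟨i,hi,hy,hx⟩|⟨i,j,hj,hy,hx⟩|⟨i,hi,hy,hx⟩) |
        (⟨i,hi,hy,hx⟩|⟨i,j,hj,hy,hx⟩|⟨i,hi,hy,hx⟩) <;>
      first
        | exact absurd hx (by simp)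
        | exact absurd hx (by decide)
        | exact absurd (hy.symm.trans hx) (by simp)
  · rintro (h|h|h|h)
    · by_cases ha : 1 ≤ a
      · rw [Ap_mid le_rfl ha] at h
        subst h
        exact ⟨by simp, Or.inl (Or.inr (Or.inl (Or.inl ⟨⟨0, by omega⟩, rfl, rfl, rfl⟩)))⟩
      · rw [Ap_big (by omega)] at h
        subst h
        exact ⟨by simp, Or.inl (Or.inl ⟨rfl, rfl, Or.inl (by omega)⟩)⟩
    · by_cases hb : 1 ≤ b
      · rw [Bp_mid le_rfl hb] at h
        subst h
        exact ⟨by simp, Or.inl (Or.inr (Or.inr (Or.inl (Or.inl ⟨⟨0, by omega⟩, rfl, rfl, rfl⟩))))⟩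
      · rw [Bp_big (by omega)] at h
        subst h
        exact ⟨by simp, Or.inl (Or.inl ⟨rfl, rfl, Or.inl (by omega)⟩)⟩
    · by_cases hcc : 1 ≤ c
      · rw [Cp_mid le_rfl hcc] at h
        subst h
        exact ⟨by simp, Or.inl (Or.inr (Or.inr (Or.inr (Or.inl (Or.inl ⟨⟨0, by omega⟩, rfl, rfl, rfl⟩)))))⟩
      · rw [Cp_big (by omega)] at h
        subst h
        exact ⟨by simp, Or.inl (Or.inl ⟨rfl, rfl, Or.inl (by omega)⟩)⟩
    · by_cases hd : 1 ≤ d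
      · rw [Dp_mid le_rfl hd] at h
        subst h
        exact ⟨by simp, Or.inl (Or.inr (Or.inr (Or.inr (Or.inr (Or.inl ⟨⟨0, by omega⟩, rfl, rfl, rfl⟩)))))⟩
      · rw [Dp_big (by omega)] at h
        subst h
        exact ⟨by simp, Or.inl (Or.inl ⟨rfl, rfl, Or.inl (by omega)⟩)⟩

lemma adj_A_iff {j : ℕ} (h1 : 1 ≤ j) (h2 : j ≤ a) (y : GammaV a b c d) :
    (Gamma a b c d).Adj (Ap a b c d j) y ↔
      y = Ap a b c d (j-1) ∨ y = Ap a b c d (j+1) := by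
  rw [Ap_mid h1 h2, Gamma, SimpleGraph.fromRel_adj]
  constructor
  · rintro ⟨hne, h | h⟩
    · rcases h with ⟨hx, hy, hz⟩ |
        (⟨i,hi,hx,hy⟩|⟨i,i',hi',hx,hy⟩|⟨i,hi,hx,hy⟩) |
        (⟨i,hi,hx,hy⟩|⟨i,i',hi',hx,hy⟩|⟨i,hi,hx,hy⟩) |
        (⟨i,hi,hx,hy⟩|⟨i,i',hi',hx,hy⟩|⟨i,hi,hx,hy⟩) |
        (⟨i,hi,hx,hy⟩|⟨i,i',hi',hx,hy⟩|⟨i,hi,hx,hy⟩)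
      · exact absurd hx (by simp)
      · exact absurd hx (by simp)
      · -- middle step forward along A
        simp only [Sum.inr.injEq, Sum.inl.injEq, Fin.mk.injEq, Fin.ext_iff] at hx
        have hlt := i'.isLt
        refine Or.inr ?_
        rw [hy, Ap_mid (by omega) (by omega)]
        simp only [Sum.inr.injEq, Sum.inl.injEq, Fin.ext_iff]
        omega
      · -- last internal vertex, step to v
        simp only [Sum.inr.injEq, Sum.inl.injEq, Fin.mk.injEq, Fin.ext_iff] at hx
        refine Or.inr ?_
        rw [hy, Ap_big (by omega)]
      · exact absurd hx (by simp)
      · exact absurd hx (by simp)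
      · exact absurd hx (by simp)
      · exact absurd hx (by simp)
      · exact absurd hx (by simp)
      · exact absurd hx (by simp)
      · exact absurd hx (by simp)
      · exact absurd hx (by simp)
      · exact absurd hx (by simp)
    · rcases h with ⟨hy, hx, hz⟩ |
        (⟨i,hi,hy,hx⟩|⟨i,i',hi',hy,hx⟩|⟨i,hi,hy,hx⟩) |
        (⟨i,hi,hy,hx⟩|⟨i,i',hi',hy,hx⟩|⟨i,hi,hy,hx⟩) |
        (⟨i,hi,hy,hx⟩|⟨i,i',hi',hy,hx⟩|⟨i,hi,hy,hx⟩) |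
        (⟨i,hi,hy,hx⟩|⟨i,i',hi',hy,hx⟩|⟨i,hi,hy,hx⟩)
      · exact absurd hx (by simp)
      · -- y = u, first vertex
        simp only [Sum.inr.injEq, Sum.inl.injEq, Fin.mk.injEq, Fin.ext_iff] at hx
        refine Or.inl ?_
        rw [hy]
        have : j = 1 := by omega
        rw [this]
        exact Ap_zero.symm
      · -- backward middle step
        simp only [Sum.inr.injEq, Sum.inl.injEq, Fin.mk.injEq, Fin.ext_iff] at hx
        have hlt := i.isLt
        refine Or.inl ?_
        rw [hy, Ap_mid (by omega) (by omega)]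
        simp only [Sum.inr.injEq, Sum.inl.injEq, Fin.ext_iff]
        omega
      · exact absurd hx (by simp)
      · exact absurd hx (by simp)
      · exact absurd hx (by simp)
      · exact absurd hx (by simp)
      · exact absurd hx (by simp)
      · exact absurd hx (by simp)
      · exact absurd hx (by simp)
      · exact absurd hx (by simp)
      · exact absurd hx (by simp)
      · exact absurd hx (by simp)
  · rintro (h|h)
    · by_cases hj : j = 1
      · subst hj
        rw [show (1:ℕ)-1 = 0 from rfl, Ap_zero] at h
        subst h
        exact ⟨by simp, Or.inr (Or.inr (Or.inl (Or.inl
          ⟨⟨0, by omega⟩, rfl, rfl, rfl⟩)))⟩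
      · rw [Ap_mid (by omega) (by omega)] at h
        subst h
        refine ⟨?_, Or.inr (Or.inr (Or.inl (Or.inr (Or.inl
          ⟨⟨j-2, by omega⟩, ⟨j-1, by omega⟩, by simp; omega, rfl, rfl⟩))))⟩
        simp only [ne_eq, Sum.inr.injEq, Sum.inl.injEq, Fin.mk.injEq]
        omega
    · by_cases hj : j = a
      · rw [Ap_big (by omega)] at h
        subst h
        exact ⟨by simp, Or.inl (Or.inr (Or.inl (Or.inr (Or.inr
          ⟨⟨j-1, by omega⟩, by simp; omega, rfl, rfl⟩))))⟩
      · rw [Ap_mid (by omega) (by omega)] at h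
        subst h
        refine ⟨?_, Or.inl (Or.inr (Or.inl (Or.inr (Or.inl
          ⟨⟨j-1, by omega⟩, ⟨j, by omega⟩, by simp; omega, rfl, rfl⟩))))⟩
        simp only [ne_eq, Sum.inr.injEq, Sum.inl.injEq, Fin.mk.injEq]
        omega

lemma adj_B_iff {j : ℕ} (h1 : 1 ≤ j) (h2 : j ≤ b) (y : GammaV a b c d) :
    (Gamma a b c d).Adj (Bp a b c d j) y ↔
      y = Bp a b c d (j-1) ∨ y = Bp a b c d (j+1) := by
  rw [Bp_mid h1 h2, Gamma, SimpleGraph.fromRel_adj]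
  constructor
  · rintro ⟨hne, h | h⟩
    · rcases h with ⟨hx, hy, hz⟩ |
        (⟨i,hi,hx,hy⟩|⟨i,i',hi',hx,hy⟩|⟨i,hi,hx,hy⟩) |
        (⟨i,hi,hx,hy⟩|⟨i,i',hi',hx,hy⟩|⟨i,hi,hx,hy⟩) |
        (⟨i,hi,hx,hy⟩|⟨i,i',hi',hx,hy⟩|⟨i,hi,hx,hy⟩) |
        (⟨i,hi,hx,hy⟩|⟨i,i',hi',hx,hy⟩|⟨i,hi,hx,hy⟩)
      · exact absurd hx (by simp)
      · exact absurd hx (by simp)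
      · exact absurd hx (by simp)
      · exact absurd hx (by simp)
      · exact absurd hx (by simp)
      · simp only [Sum.inr.injEq, Sum.inl.injEq, Fin.mk.injEq, Fin.ext_iff] at hx
        have hlt := i'.isLt
        refine Or.inr ?_
        rw [hy, Bp_mid (by omega) (by omega)]
        simp only [Sum.inr.injEq, Sum.inl.injEq, Fin.ext_iff]
        omega
      · simp only [Sum.inr.injEq, Sum.inl.injEq, Fin.mk.injEq, Fin.ext_iff] at hx
        refine Or.inr ?_
        rw [hy, Bp_big (by omega)]
      · exact absurd hx (by simp)
      · exact absurd hx (by simp)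
      · exact absurd hx (by simp)
      · exact absurd hx (by simp)
      · exact absurd hx (by simp)
      · exact absurd hx (by simp)
    · rcases h with ⟨hy, hx, hz⟩ |
        (⟨i,hi,hy,hx⟩|⟨i,i',hi',hy,hx⟩|⟨i,hi,hy,hx⟩) |
        (⟨i,hi,hy,hx⟩|⟨i,i',hi',hy,hx⟩|⟨i,hi,hy,hx⟩) |
        (⟨i,hi,hy,hx⟩|⟨i,i',hi',hy,hx⟩|⟨i,hi,hy,hx⟩) |
        (⟨i,hi,hy,hx⟩|⟨i,i',hi',hy,hx⟩|⟨i,hi,hy,hx⟩)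
      · exact absurd hx (by simp)
      · exact absurd hx (by simp)
      · exact absurd hx (by simp)
      · exact absurd hx (by simp)
      · simp only [Sum.inr.injEq, Sum.inl.injEq, Fin.mk.injEq, Fin.ext_iff] at hx
        refine Or.inl ?_
        rw [hy]
        have : j = 1 := by omega
        rw [this]
        exact Bp_zero.symm
      · simp only [Sum.inr.injEq, Sum.inl.injEq, Fin.mk.injEq, Fin.ext_iff] at hx
        have hlt := i.isLt
        refine Or.inl ?_
        rw [hy, Bp_mid (by omega) (by omega)]
        simp only [Sum.inr.injEq, Sum.inl.injEq, Fin.ext_iff]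
        omega
      · exact absurd hx (by simp)
      · exact absurd hx (by simp)
      · exact absurd hx (by simp)
      · exact absurd hx (by simp)
      · exact absurd hx (by simp)
      · exact absurd hx (by simp)
      · exact absurd hx (by simp)
  · rintro (h|h)
    · by_cases hj : j = 1
      · subst hj
        rw [show (1:ℕ)-1 = 0 from rfl, Bp_zero] at h
        subst h
        exact ⟨by simp, Or.inr (Or.inr (Or.inr (Or.inl (Or.inl ⟨⟨0, by omega⟩, rfl, rfl, rfl⟩))))⟩
      · rw [Bp_mid (by omega) (by omega)] at h
        subst h
        refine ⟨?_, Or.inr (Or.inr (Or.inr (Or.inl (Or.inr (Or.inl ⟨⟨j-2, by omega⟩, ⟨j-1, by omega⟩, by simp; omega, rfl, rfl⟩)))))⟩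
        simp only [ne_eq, Sum.inr.injEq, Sum.inl.injEq, Fin.mk.injEq]
        omega
    · by_cases hj : j = b
      · rw [Bp_big (by omega)] at h
        subst h
        exact ⟨by simp, Or.inl (Or.inr (Or.inr (Or.inl (Or.inr (Or.inr ⟨⟨j-1, by omega⟩, by simp; omega, rfl, rfl⟩)))))⟩
      · rw [Bp_mid (by omega) (by omega)] at h
        subst h
        refine ⟨?_, Or.inl (Or.inr (Or.inr (Or.inl (Or.inr (Or.inl ⟨⟨j-1, by omega⟩, ⟨j, by omega⟩, by simp; omega, rfl, rfl⟩)))))⟩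
        simp only [ne_eq, Sum.inr.injEq, Sum.inl.injEq, Fin.mk.injEq]
        omega


lemma adj_C_iff {j : ℕ} (h1 : 1 ≤ j) (h2 : j ≤ c) (y : GammaV a b c d) :
    (Gamma a b c d).Adj (Cp a b c d j) y ↔
      y = Cp a b c d (j-1) ∨ y = Cp a b c d (j+1) := by
  rw [Cp_mid h1 h2, Gamma, SimpleGraph.fromRel_adj]
  constructor
  · rintro ⟨hne, h | h⟩
    · rcases h with ⟨hx, hy, hz⟩ |
        (⟨i,hi,hx,hy⟩|⟨i,i',hi',hx,hy⟩|⟨i,hi,hx,hy⟩) |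
        (⟨i,hi,hx,hy⟩|⟨i,i',hi',hx,hy⟩|⟨i,hi,hx,hy⟩) |
        (⟨i,hi,hx,hy⟩|⟨i,i',hi',hx,hy⟩|⟨i,hi,hx,hy⟩) |
        (⟨i,hi,hx,hy⟩|⟨i,i',hi',hx,hy⟩|⟨i,hi,hx,hy⟩)
      · exact absurd hx (by simp)
      · exact absurd hx (by simp)
      · exact absurd hx (by simp)
      · exact absurd hx (by simp)
      · exact absurd hx (by simp)
      · exact absurd hx (by simp)
      · exact absurd hx (by simp)
      · exact absurd hx (by simp)
      · simp only [Sum.inr.injEq, Sum.inl.injEq, Fin.mk.injEq, Fin.ext_iff] at hx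
        have hlt := i'.isLt
        refine Or.inr ?_
        rw [hy, Cp_mid (by omega) (by omega)]
        simp only [Sum.inr.injEq, Sum.inl.injEq, Fin.ext_iff]
        omega
      · simp only [Sum.inr.injEq, Sum.inl.injEq, Fin.mk.injEq, Fin.ext_iff] at hx
        refine Or.inr ?_
        rw [hy, Cp_big (by omega)]
      · exact absurd hx (by simp)
      · exact absurd hx (by simp)
      · exact absurd hx (by simp)
    · rcases h with ⟨hy, hx, hz⟩ |
        (⟨i,hi,hy,hx⟩|⟨i,i',hi',hy,hx⟩|⟨i,hi,hy,hx⟩) |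
        (⟨i,hi,hy,hx⟩|⟨i,i',hi',hy,hx⟩|⟨i,hi,hy,hx⟩) |
        (⟨i,hi,hy,hx⟩|⟨i,i',hi',hy,hx⟩|⟨i,hi,hy,hx⟩) |
        (⟨i,hi,hy,hx⟩|⟨i,i',hi',hy,hx⟩|⟨i,hi,hy,hx⟩)
      · exact absurd hx (by simp)
      · exact absurd hx (by simp)
      · exact absurd hx (by simp)
      · exact absurd hx (by simp)
      · exact absurd hx (by simp)
      · exact absurd hx (by simp)
      · exact absurd hx (by simp)
      · simp only [Sum.inr.injEq, Sum.inl.injEq, Fin.mk.injEq, Fin.ext_iff] at hx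
        refine Or.inl ?_
        rw [hy]
        have : j = 1 := by omega
        rw [this]
        exact Cp_zero.symm
      · simp only [Sum.inr.injEq, Sum.inl.injEq, Fin.mk.injEq, Fin.ext_iff] at hx
        have hlt := i.isLt
        refine Or.inl ?_
        rw [hy, Cp_mid (by omega) (by omega)]
        simp only [Sum.inr.injEq, Sum.inl.injEq, Fin.ext_iff]
        omega
      · exact absurd hx (by simp)
      · exact absurd hx (by simp)
      · exact absurd hx (by simp)
      · exact absurd hx (by simp)
  · rintro (h|h)
    · by_cases hj : j = 1
      · subst hj
        rw [show (1:ℕ)-1 = 0 from rfl, Cp_zero] at h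
        subst h
        exact ⟨by simp, Or.inr (Or.inr (Or.inr (Or.inr (Or.inl (Or.inl ⟨⟨0, by omega⟩, rfl, rfl, rfl⟩)))))⟩
      · rw [Cp_mid (by omega) (by omega)] at h
        subst h
        refine ⟨?_, Or.inr (Or.inr (Or.inr (Or.inr (Or.inl (Or.inr (Or.inl ⟨⟨j-2, by omega⟩, ⟨j-1, by omega⟩, by simp; omega, rfl, rfl⟩))))))⟩
        simp only [ne_eq, Sum.inr.injEq, Sum.inl.injEq, Fin.mk.injEq]
        omega
    · by_cases hj : j = c
      · rw [Cp_big (by omega)] at h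
        subst h
        exact ⟨by simp, Or.inl (Or.inr (Or.inr (Or.inr (Or.inl (Or.inr (Or.inr ⟨⟨j-1, by omega⟩, by simp; omega, rfl, rfl⟩))))))⟩
      · rw [Cp_mid (by omega) (by omega)] at h
        subst h
        refine ⟨?_, Or.inl (Or.inr (Or.inr (Or.inr (Or.inl (Or.inr (Or.inl ⟨⟨j-1, by omega⟩, ⟨j, by omega⟩, by simp; omega, rfl, rfl⟩))))))⟩
        simp only [ne_eq, Sum.inr.injEq, Sum.inl.injEq, Fin.mk.injEq]
        omega


lemma adj_D_iff {j : ℕ} (h1 : 1 ≤ j) (h2 : j ≤ d) (y : GammaV a b c d) :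
    (Gamma a b c d).Adj (Dp a b c d j) y ↔
      y = Dp a b c d (j-1) ∨ y = Dp a b c d (j+1) := by
  rw [Dp_mid h1 h2, Gamma, SimpleGraph.fromRel_adj]
  constructor
  · rintro ⟨hne, h | h⟩
    · rcases h with ⟨hx, hy, hz⟩ |
        (⟨i,hi,hx,hy⟩|⟨i,i',hi',hx,hy⟩|⟨i,hi,hx,hy⟩) |
        (⟨i,hi,hx,hy⟩|⟨i,i',hi',hx,hy⟩|⟨i,hi,hx,hy⟩) |
        (⟨i,hi,hx,hy⟩|⟨i,i',hi',hx,hy⟩|⟨i,hi,hx,hy⟩) |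
        (⟨i,hi,hx,hy⟩|⟨i,i',hi',hx,hy⟩|⟨i,hi,hx,hy⟩)
      · exact absurd hx (by simp)
      · exact absurd hx (by simp)
      · exact absurd hx (by simp)
      · exact absurd hx (by simp)
      · exact absurd hx (by simp)
      · exact absurd hx (by simp)
      · exact absurd hx (by simp)
      · exact absurd hx (by simp)
      · exact absurd hx (by simp)
      · exact absurd hx (by simp)
      · exact absurd hx (by simp)
      · simp only [Sum.inr.injEq, Sum.inl.injEq, Fin.mk.injEq, Fin.ext_iff] at hx
        have hlt := i'.isLt
        refine Or.inr ?_
        rw [hy, Dp_mid (by omega) (by omega)]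
        simp only [Sum.inr.injEq, Sum.inl.injEq, Fin.ext_iff]
        omega
      · simp only [Sum.inr.injEq, Sum.inl.injEq, Fin.mk.injEq, Fin.ext_iff] at hx
        refine Or.inr ?_
        rw [hy, Dp_big (by omega)]
    · rcases h with ⟨hy, hx, hz⟩ |
        (⟨i,hi,hy,hx⟩|⟨i,i',hi',hy,hx⟩|⟨i,hi,hy,hx⟩) |
        (⟨i,hi,hy,hx⟩|⟨i,i',hi',hy,hx⟩|⟨i,hi,hy,hx⟩) |
        (⟨i,hi,hy,hx⟩|⟨i,i',hi',hy,hx⟩|⟨i,hi,hy,hx⟩) |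
        (⟨i,hi,hy,hx⟩|⟨i,i',hi',hy,hx⟩|⟨i,hi,hy,hx⟩)
      · exact absurd hx (by simp)
      · exact absurd hx (by simp)
      · exact absurd hx (by simp)
      · exact absurd hx (by simp)
      · exact absurd hx (by simp)
      · exact absurd hx (by simp)
      · exact absurd hx (by simp)
      · exact absurd hx (by simp)
      · exact absurd hx (by simp)
      · exact absurd hx (by simp)
      · simp only [Sum.inr.injEq, Sum.inl.injEq, Fin.mk.injEq, Fin.ext_iff] at hx
        refine Or.inl ?_
        rw [hy]
        have : j = 1 := by omega
        rw [this]
        exact Dp_zero.symm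
      · simp only [Sum.inr.injEq, Sum.inl.injEq, Fin.mk.injEq, Fin.ext_iff] at hx
        have hlt := i.isLt
        refine Or.inl ?_
        rw [hy, Dp_mid (by omega) (by omega)]
        simp only [Sum.inr.injEq, Sum.inl.injEq, Fin.ext_iff]
        omega
      · exact absurd hx (by simp)
  · rintro (h|h)
    · by_cases hj : j = 1
      · subst hj
        rw [show (1:ℕ)-1 = 0 from rfl, Dp_zero] at h
        subst h
        exact ⟨by simp, Or.inr (Or.inr (Or.inr (Or.inr (Or.inr (Or.inl ⟨⟨0, by omega⟩, rfl, rfl, rfl⟩)))))⟩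
      · rw [Dp_mid (by omega) (by omega)] at h
        subst h
        refine ⟨?_, Or.inr (Or.inr (Or.inr (Or.inr (Or.inr (Or.inr (Or.inl ⟨⟨j-2, by omega⟩, ⟨j-1, by omega⟩, by simp; omega, rfl, rfl⟩))))))⟩
        simp only [ne_eq, Sum.inr.injEq, Sum.inl.injEq, Fin.mk.injEq]
        omega
    · by_cases hj : j = d
      · rw [Dp_big (by omega)] at h
        subst h
        exact ⟨by simp, Or.inl (Or.inr (Or.inr (Or.inr (Or.inr (Or.inr (Or.inr ⟨⟨j-1, by omega⟩, by simp; omega, rfl, rfl⟩))))))⟩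
      · rw [Dp_mid (by omega) (by omega)] at h
        subst h
        refine ⟨?_, Or.inl (Or.inr (Or.inr (Or.inr (Or.inr (Or.inr (Or.inl ⟨⟨j-1, by omega⟩, ⟨j, by omega⟩, by simp; omega, rfl, rfl⟩))))))⟩
        simp only [ne_eq, Sum.inr.injEq, Sum.inl.injEq, Fin.mk.injEq]
        omega

lemma adj_v_iff (hab : a ≤ b) (hbc : b ≤ c) (hcd : c ≤ d) (y : GammaV a b c d) :
    (Gamma a b c d).Adj (Sum.inl 1) y ↔
      y = Ap a b c d a ∨ y = Bp a b c d b ∨ y = Cp a b c d c ∨ y = Dp a b c d d := by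
  rw [Gamma, SimpleGraph.fromRel_adj]
  constructor
  · rintro ⟨hne, h | h⟩
    · rcases h with ⟨hx, hy, hz⟩ |
        (⟨i,hi,hx,hy⟩|⟨i,i',hi',hx,hy⟩|⟨i,hi,hx,hy⟩) |
        (⟨i,hi,hx,hy⟩|⟨i,i',hi',hx,hy⟩|⟨i,hi,hx,hy⟩) |
        (⟨i,hi,hx,hy⟩|⟨i,i',hi',hx,hy⟩|⟨i,hi,hx,hy⟩) |
        (⟨i,hi,hx,hy⟩|⟨i,i',hi',hx,hy⟩|⟨i,hi,hx,hy⟩) <;>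
      exact absurd hx (by simp)
    · rcases h with ⟨hy, hx, hz⟩ |
        (⟨i,hi,hy,hx⟩|⟨i,i',hi',hy,hx⟩|⟨i,hi,hy,hx⟩) |
        (⟨i,hi,hy,hx⟩|⟨i,i',hi',hy,hx⟩|⟨i,hi,hy,hx⟩) |
        (⟨i,hi,hy,hx⟩|⟨i,i',hi',hy,hx⟩|⟨i,hi,hy,hx⟩) |
        (⟨i,hi,hy,hx⟩|⟨i,i',hi',hy,hx⟩|⟨i,hi,hy,hx⟩)
      · have ha : a = 0 := by omega
        refine Or.inl ?_
        rw [hy, ha, Ap_zero]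
      · exact absurd hx (by simp)
      · exact absurd hx (by simp)
      · have hlt := i.isLt
        refine Or.inl ?_
        rw [hy, Ap_mid (by omega) (by omega)]
        simp only [Sum.inr.injEq, Sum.inl.injEq, Fin.ext_iff]
        omega
      · exact absurd hx (by simp)
      · exact absurd hx (by simp)
      · have hlt := i.isLt
        refine Or.inr (Or.inl ?_)
        rw [hy, Bp_mid (by omega) (by omega)]
        simp only [Sum.inr.injEq, Sum.inl.injEq, Fin.ext_iff]
        omega
      · exact absurd hx (by simp)
      · exact absurd hx (by simp)
      · have hlt := i.isLt
        refine Or.inr (Or.inr (Or.inl ?_))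
        rw [hy, Cp_mid (by omega) (by omega)]
        simp only [Sum.inr.injEq, Sum.inl.injEq, Fin.ext_iff]
        omega
      · exact absurd hx (by simp)
      · exact absurd hx (by simp)
      · have hlt := i.isLt
        refine Or.inr (Or.inr (Or.inr ?_))
        rw [hy, Dp_mid (by omega) (by omega)]
        simp only [Sum.inr.injEq, Sum.inl.injEq, Fin.ext_iff]
        omega
  · rintro (h|h|h|h)
    · by_cases ha : 1 ≤ a
      · rw [Ap_mid ha le_rfl] at h
        subst h
        exact ⟨by simp, Or.inr (Or.inr (Or.inl (Or.inr (Or.inr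
          ⟨⟨a-1, by omega⟩, by simp, rfl, rfl⟩))))⟩
      · have ha0 : a = 0 := by omega
        have hz' : Ap a b c d a = Sum.inl 0 := by
          rw [Ap, dif_neg (by omega), if_pos ha0]
        rw [hz'] at h
        subst h
        exact ⟨by simp, Or.inr (Or.inl ⟨rfl, rfl, Or.inl ha0⟩)⟩
    · by_cases hb : 1 ≤ b
      · rw [Bp_mid hb le_rfl] at h
        subst h
        exact ⟨by simp, Or.inr (Or.inr (Or.inr (Or.inl (Or.inr (Or.inr
          ⟨⟨b-1, by omega⟩, by simp, rfl, rfl⟩)))))⟩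
      · have hb0 : b = 0 := by omega
        have hz' : Bp a b c d b = Sum.inl 0 := by
          rw [Bp, dif_neg (by omega), if_pos hb0]
        rw [hz'] at h
        subst h
        exact ⟨by simp, Or.inr (Or.inl ⟨rfl, rfl, Or.inr (Or.inl hb0)⟩)⟩
    · by_cases hcc : 1 ≤ c
      · rw [Cp_mid hcc le_rfl] at h
        subst h
        exact ⟨by simp, Or.inr (Or.inr (Or.inr (Or.inr (Or.inl (Or.inr (Or.inr
          ⟨⟨c-1, by omega⟩, by simp, rfl, rfl⟩))))))⟩
      · have hc0 : c = 0 := by omega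
        have hz' : Cp a b c d c = Sum.inl 0 := by
          rw [Cp, dif_neg (by omega), if_pos hc0]
        rw [hz'] at h
        subst h
        exact ⟨by simp, Or.inr (Or.inl ⟨rfl, rfl, Or.inr (Or.inr (Or.inl hc0))⟩)⟩
    · by_cases hd : 1 ≤ d
      · rw [Dp_mid hd le_rfl] at h
        subst h
        exact ⟨by simp, Or.inr (Or.inr (Or.inr (Or.inr (Or.inr (Or.inr (Or.inr
          ⟨⟨d-1, by omega⟩, by simp, rfl, rfl⟩))))))⟩
      · have hd0 : d = 0 := by omega
        have hz' : Dp a b c d d = Sum.inl 0 := by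
          rw [Dp, dif_neg (by omega), if_pos hd0]
        rw [hz'] at h
        subst h
        exact ⟨by simp, Or.inr (Or.inl ⟨rfl, rfl, Or.inr (Or.inr (Or.inr hd0))⟩)⟩

lemma Ap_inj {k l : ℕ} (hk : k ≤ a+1) (hl : l ≤ a+1) (h : Ap a b c d k = Ap a b c d l) :
    k = l := by
  unfold Ap at h
  split_ifs at h <;> simp_all [Fin.ext_iff] <;> omega
lemma Bp_inj {k l : ℕ} (hk : k ≤ b+1) (hl : l ≤ b+1) (h : Bp a b c d k = Bp a b c d l) :
    k = l := by
  unfold Bp at h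
  split_ifs at h <;> simp_all [Fin.ext_iff] <;> omega
lemma Cp_inj {k l : ℕ} (hk : k ≤ c+1) (hl : l ≤ c+1) (h : Cp a b c d k = Cp a b c d l) :
    k = l := by
  unfold Cp at h
  split_ifs at h <;> simp_all [Fin.ext_iff] <;> omega
lemma Dp_inj {k l : ℕ} (hk : k ≤ d+1) (hl : l ≤ d+1) (h : Dp a b c d k = Dp a b c d l) :
    k = l := by
  unfold Dp at h
  split_ifs at h <;> simp_all [Fin.ext_iff] <;> omega

lemma Ap_ne_D {k : ℕ} (h1 : 1 ≤ k) (h2 : k ≤ a) (j : ℕ) :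
    Ap a b c d k ≠ Dp a b c d j := by
  rw [Ap_mid h1 h2]; unfold Dp; split_ifs <;> simp
lemma Bp_ne_D {k : ℕ} (h1 : 1 ≤ k) (h2 : k ≤ b) (j : ℕ) :
    Bp a b c d k ≠ Dp a b c d j := by
  rw [Bp_mid h1 h2]; unfold Dp; split_ifs <;> simp
lemma Cp_ne_D {k : ℕ} (h1 : 1 ≤ k) (h2 : k ≤ c) (j : ℕ) :
    Cp a b c d k ≠ Dp a b c d j := by
  rw [Cp_mid h1 h2]; unfold Dp; split_ifs <;> simp
lemma u_ne_Dmid {j : ℕ} (h1 : 1 ≤ j) (h2 : j ≤ d) :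
    (Sum.inl 0 : GammaV a b c d) ≠ Dp a b c d j := by
  rw [Dp_mid h1 h2]; simp
lemma v_ne_Dmid {j : ℕ} (h1 : 1 ≤ j) (h2 : j ≤ d) :
    (Sum.inl 1 : GammaV a b c d) ≠ Dp a b c d j := by
  rw [Dp_mid h1 h2]; simp

/-- branch data -/
structure Br (a b c d ℓ : ℕ) (f : ℕ → GammaV a b c d) : Prop where
  f0 : f 0 = Sum.inl 0
  fv : ∀ k, ℓ ≤ k → f k = Sum.inl 1
  nbr : ∀ k, 1 ≤ k → k < ℓ → ∀ y, (Gamma a b c d).Adj (f k) y ↔ y = f (k-1) ∨ y = f (k+1)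
  inj : ∀ k l, k ≤ ℓ → l ≤ ℓ → f k = f l → k = l
  pos : 1 ≤ ℓ
  neD : ℓ ≤ d → ∀ k, 1 ≤ k → k < ℓ → ∀ j, f k ≠ Dp a b c d j

lemma brA : Br a b c d (a+1) (Ap a b c d) where
  f0 := Ap_zero
  fv := fun k hk => Ap_big hk
  nbr := fun k h1 h2 y => adj_A_iff h1 (by omega) y
  inj := fun k l hk hl h => Ap_inj hk hl h
  pos := by omega
  neD := fun _ k h1 h2 j => Ap_ne_D h1 (by omega) j
lemma brB : Br a b c d (b+1) (Bp a b c d) where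
  f0 := Bp_zero
  fv := fun k hk => Bp_big hk
  nbr := fun k h1 h2 y => adj_B_iff h1 (by omega) y
  inj := fun k l hk hl h => Bp_inj hk hl h
  pos := by omega
  neD := fun _ k h1 h2 j => Bp_ne_D h1 (by omega) j
lemma brC : Br a b c d (c+1) (Cp a b c d) where
  f0 := Cp_zero
  fv := fun k hk => Cp_big hk
  nbr := fun k h1 h2 y => adj_C_iff h1 (by omega) y
  inj := fun k l hk hl h => Cp_inj hk hl h
  pos := by omega
  neD := fun _ k h1 h2 j => Cp_ne_D h1 (by omega) j
lemma brD : Br a b c d (d+1) (Dp a b c d) where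
  f0 := Dp_zero
  fv := fun k hk => Dp_big hk
  nbr := fun k h1 h2 y => adj_D_iff h1 (by omega) y
  inj := fun k l hk hl h => Dp_inj hk hl h
  pos := by omega
  neD := fun h _ _ _ _ => by omega

end GammaAux

section Walk2
variable {V : Type*} {G : SimpleGraph V}

lemma two_le_length {w : V} {p : G.Walk w w} (h : p.getVert 1 ≠ w) : 2 ≤ p.length := by
  by_contra hcon
  exact h (p.getVert_of_length_le (by omega))

end Walk2

namespace GammaAux
variable {a b c d : ℕ}

lemma cor_u {ℓ : ℕ} {f : ℕ → GammaV a b c d}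
    {p : (Gamma a b c d).Walk (Sum.inl 0) (Sum.inl 0)} (hp : p.IsTrail)
    (hBr : Br a b c d ℓ f) (h1 : p.getVert 1 = f 1) :
    ℓ < p.length ∧ ∀ k ≤ ℓ, p.getVert k = f k := by
  have hne : ∀ k, 1 ≤ k → k ≤ ℓ → f k ≠ Sum.inl 0 := by
    intro k hk1 hk2 he
    have := hBr.inj k 0 hk2 (by omega) (he.trans hBr.f0.symm)
    omega
  have hlen1 : 1 ≤ p.length := by
    by_contra hcon
    have h0 : p.getVert 1 = Sum.inl 0 := p.getVert_of_length_le (by omega)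
    exact hne 1 le_rfl hBr.pos (h1.symm.trans h0)
  obtain ⟨hle, hval⟩ := corridor hp 0 ℓ f hBr.pos
    (by rw [Walk.getVert_zero, hBr.f0]) (by simpa using h1) (by simpa using hlen1)
    hBr.nbr hne
  have hval' : ∀ k ≤ ℓ, p.getVert k = f k := fun k hk => by simpa using hval k hk
  refine ⟨?_, hval'⟩
  rcases Nat.eq_or_lt_of_le (show ℓ ≤ p.length by omega) with he | h
  · exfalso
    have h2 := hval' ℓ le_rfl
    rw [hBr.fv ℓ le_rfl, he, Walk.getVert_length] at h2
    exact uv_ne h2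
  · exact h

lemma B1core (hab : a ≤ b) (hbc : b ≤ c) (hcd : c ≤ d)
    {p q : (Gamma a b c d).Walk (Sum.inl 0) (Sum.inl 0)}
    (hp : p.IsEulerian) (hq : q.IsEulerian) (hav : Avoiding (Gamma a b c d) p q)
    {ℓX ℓY : ℕ} {fX fY : ℕ → GammaV a b c d}
    (brX : Br a b c d ℓX fX) (brY : Br a b c d ℓY fY)
    (hp1 : p.getVert 1 = fX 1) (hq1 : q.getVert 1 = fY 1)
    (hd2 : ℓX ≤ ℓY + 1 ∧ ℓY ≤ ℓX + 1) : False := by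
  classical
  have hlen : p.length = q.length := eulerian_length_eq hp hq
  obtain ⟨hpl, hpv⟩ := cor_u hp.isTrail brX hp1
  obtain ⟨hql, hqv⟩ := cor_u hq.isTrail brY hq1
  exact conflict hlen hav (x := Sum.inl 1)
    (by rw [hpv ℓX le_rfl, brX.fv ℓX le_rfl]) (by rw [hqv ℓY le_rfl, brY.fv ℓY le_rfl])
    brX.pos brY.pos hpl hql hd2

lemma B1 (hab : a ≤ b) (hbc : b ≤ c) (hcd : c ≤ d) (hc : c ≤ a + 1)
    (hb : 1 ≤ b) (hdle : d ≤ a + 1)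
    {p q : (Gamma a b c d).Walk (Sum.inl 0) (Sum.inl 0)}
    (hp : p.IsEulerian) (hq : q.IsEulerian) (hav : Avoiding (Gamma a b c d) p q) :
    False := by
  classical
  have hadj : (Gamma a b c d).Adj (Sum.inl 0) (Bp a b c d 1) :=
    (adj_u_iff hab hbc hcd _).mpr (Or.inr (Or.inl rfl))
  have hp0 : 0 < p.length := length_pos_of_eulerian hp hadj
  have hq0 : 0 < q.length := length_pos_of_eulerian hq hadj
  have hp1 : (Gamma a b c d).Adj (Sum.inl 0) (p.getVert 1) := by
    have h2 := p.adj_getVert_succ hp0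
    rwa [Walk.getVert_zero] at h2
  have hq1 : (Gamma a b c d).Adj (Sum.inl 0) (q.getVert 1) := by
    have h2 := q.adj_getVert_succ hq0
    rwa [Walk.getVert_zero] at h2
  have hpc := (adj_u_iff hab hbc hcd _).mp hp1
  have hqc := (adj_u_iff hab hbc hcd _).mp hq1
  rcases hpc with h|h|h|h <;> rcases hqc with h'|h'|h'|h' <;>
    first
    | exact B1core hab hbc hcd hp hq hav brA brA h h' ⟨by omega, by omega⟩
    | exact B1core hab hbc hcd hp hq hav brA brB h h' ⟨by omega, by omega⟩
    | exact B1core hab hbc hcd hp hq hav brA brC h h' ⟨by omega, by omega⟩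
    | exact B1core hab hbc hcd hp hq hav brA brD h h' ⟨by omega, by omega⟩
    | exact B1core hab hbc hcd hp hq hav brB brA h h' ⟨by omega, by omega⟩
    | exact B1core hab hbc hcd hp hq hav brB brB h h' ⟨by omega, by omega⟩
    | exact B1core hab hbc hcd hp hq hav brB brC h h' ⟨by omega, by omega⟩
    | exact B1core hab hbc hcd hp hq hav brB brD h h' ⟨by omega, by omega⟩
    | exact B1core hab hbc hcd hp hq hav brC brA h h' ⟨by omega, by omega⟩
    | exact B1core hab hbc hcd hp hq hav brC brB h h' ⟨by omega, by omega⟩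
    | exact B1core hab hbc hcd hp hq hav brC brC h h' ⟨by omega, by omega⟩
    | exact B1core hab hbc hcd hp hq hav brC brD h h' ⟨by omega, by omega⟩
    | exact B1core hab hbc hcd hp hq hav brD brA h h' ⟨by omega, by omega⟩
    | exact B1core hab hbc hcd hp hq hav brD brB h h' ⟨by omega, by omega⟩
    | exact B1core hab hbc hcd hp hq hav brD brC h h' ⟨by omega, by omega⟩
    | exact B1core hab hbc hcd hp hq hav brD brD h h' ⟨by omega, by omega⟩


lemma cross (hr1 : 1 ≤ r) (hrd : r ≤ d)
    {ℓ : ℕ} {f : ℕ → GammaV a b c d} (hBr : Br a b c d ℓ f) (hℓ : ℓ ≤ d)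
    {qr : (Gamma a b c d).Walk (Dp a b c d r) (Dp a b c d r)} (hqr : qr.IsTrail)
    {s : ℕ} (hs : qr.getVert s = Sum.inl 1) (hs1 : qr.getVert (s+1) = f (ℓ-1))
    (hslen : s + 1 ≤ qr.length) :
    s + ℓ < qr.length ∧ qr.getVert (s + ℓ) = Sum.inl 0 := by
  obtain ⟨hle, hval⟩ := corridor hqr s ℓ (fun k => f (ℓ - k)) hBr.pos
    (by simpa [hBr.fv ℓ le_rfl] using hs)
    (by simpa using hs1) hslen
    (fun k hk1 hk2 y => by
      rw [hBr.nbr (ℓ-k) (by omega) (by omega)]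
      constructor
      · rintro (h|h)
        · right; rw [h]; all_goals (congr 1 <;> omega)
        · left; rw [h]; all_goals (congr 1 <;> omega)
      · rintro (h|h)
        · right; rw [h]; all_goals (congr 1 <;> omega)
        · left; rw [h]; all_goals (congr 1 <;> omega))
    (by
      intro k hk1 hk2 he
      rcases Nat.eq_or_lt_of_le hk2 with he2 | hlt
      · rw [he2] at he
        simp only [Nat.sub_self] at he
        rw [hBr.f0] at he
        exact u_ne_Dmid hr1 hrd he
      · exact hBr.neD hℓ (ℓ-k) (by omega) (by omega) r he)
  have hval' : qr.getVert (s + ℓ) = Sum.inl 0 := by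
    have h2 := hval ℓ le_rfl
    simp only [Nat.sub_self] at h2
    rw [hBr.f0] at h2
    exact h2
  refine ⟨?_, hval'⟩
  rcases Nat.eq_or_lt_of_le hle with he | h
  · exfalso
    rw [he, Walk.getVert_length] at hval'
    exact u_ne_Dmid hr1 hrd hval'.symm
  · exact h

lemma B2core (hab : a ≤ b) (hbc : b ≤ c) (hcd : c ≤ d) (hc : c ≤ a + 1)
    (hd2 : a + 2 ≤ d) {r s : ℕ} (hr1 : 1 ≤ r) (hrd : r ≤ d) (hrs : r + s = d + 1)
    (hm1 : s + a + 1 ≤ r) (hm2 : r ≤ s + a + 2)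
    {p q : (Gamma a b c d).Walk (Dp a b c d r) (Dp a b c d r)}
    (hp : p.IsEulerian) (hq : q.IsEulerian) (hav : Avoiding (Gamma a b c d) p q)
    (hp1 : p.getVert 1 = Dp a b c d (r+1)) (hq1 : q.getVert 1 = Dp a b c d (r-1)) :
    False := by
  classical
  have hlen : p.length = q.length := eulerian_length_eq hp hq
  have hs1 : 1 ≤ s := by omega
  have hplen2 : 2 ≤ p.length := two_le_length (by
    rw [hp1]
    intro he
    have := Dp_inj (show r+1 ≤ d+1 by omega) (show r ≤ d+1 by omega) he
    omega)
  have hqlen2 : 2 ≤ q.length := two_le_length (by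
    rw [hq1]
    intro he
    have := Dp_inj (show r-1 ≤ d+1 by omega) (show r ≤ d+1 by omega) he
    omega)
  -- first vertex of the reversed walks
  have hprev : p.reverse.getVert 1 = Dp a b c d (r-1) := by
    have hrl : 0 < p.reverse.length := by rw [Walk.length_reverse]; omega
    have hadj := p.reverse.adj_getVert_succ hrl
    rw [Walk.getVert_zero] at hadj
    rcases (adj_D_iff hr1 hrd _).mp hadj with h|h
    · exact h
    · exact absurd (h.trans hp1.symm) (rev_one_ne hp.isTrail hplen2)
  have hqrev : q.reverse.getVert 1 = Dp a b c d (r+1) := by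
    have hrl : 0 < q.reverse.length := by rw [Walk.length_reverse]; omega
    have hadj := q.reverse.adj_getVert_succ hrl
    rw [Walk.getVert_zero] at hadj
    rcases (adj_D_iff hr1 hrd _).mp hadj with h|h
    · exact absurd (h.trans hq1.symm) (rev_one_ne hq.isTrail hqlen2)
    · exact h
  -- corridor on p.reverse towards u
  obtain ⟨hprl, hprv⟩ := corridor hp.isTrail.reverse 0 r (fun k => Dp a b c d (r-k)) hr1
    (by simp) (by simpa using hprev) (by rw [Walk.length_reverse]; omega)
    (fun k hk1 hk2 y => by
      rw [adj_D_iff (show 1 ≤ r-k by omega) (show r-k ≤ d by omega) y]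
      constructor
      · rintro (h|h)
        · right; rw [h]; all_goals (congr 1 <;> omega)
        · left; rw [h]; all_goals (congr 1 <;> omega)
      · rintro (h|h)
        · right; rw [h]; all_goals (congr 1 <;> omega)
        · left; rw [h]; all_goals (congr 1 <;> omega))
    (fun k hk1 hk2 he => by
      have := Dp_inj (show r-k ≤ d+1 by omega) (show r ≤ d+1 by omega) he
      omega)
  have hpru : p.reverse.getVert r = Sum.inl 0 := by
    have h2 := hprv r le_rfl
    simpa [Dp_zero] using h2
  have hprl' : r < p.reverse.length := by
    rcases Nat.eq_or_lt_of_le (show r ≤ p.reverse.length by omega) with he | h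
    · exfalso
      have h3 := Walk.getVert_length p.reverse
      rw [← he] at h3
      exact u_ne_Dmid hr1 hrd (hpru.symm.trans h3)
    · exact h
  have hpu : p.getVert (p.length - r) = Sum.inl 0 := by
    have h2 := hpru
    rwa [Walk.getVert_reverse] at h2
  -- corridor on q.reverse towards v
  obtain ⟨hqrl, hqrv⟩ := corridor hq.isTrail.reverse 0 s (fun k => Dp a b c d (r+k)) hs1
    (by simp) (by simpa using hqrev) (by rw [Walk.length_reverse]; omega)
    (fun k hk1 hk2 y => by
      rw [adj_D_iff (show 1 ≤ r+k by omega) (show r+k ≤ d by omega) y]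
      constructor
      · rintro (h|h)
        · left; rw [h]; all_goals (congr 1 <;> omega)
        · right; rw [h]; all_goals (congr 1 <;> omega)
      · rintro (h|h)
        · left; rw [h]; all_goals (congr 1 <;> omega)
        · right; rw [h]; all_goals (congr 1 <;> omega))
    (fun k hk1 hk2 he => by
      have := Dp_inj (show r+k ≤ d+1 by omega) (show r ≤ d+1 by omega) he
      omega)
  have hqrv' : ∀ k ≤ s, q.reverse.getVert k = Dp a b c d (r+k) := fun k hk => by
    simpa using hqrv k hk
  have hqs : q.reverse.getVert s = Sum.inl 1 := by
    have h2 := hqrv' s le_rfl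
    exact h2.trans ((congrArg (Dp a b c d) hrs).trans (Dp_big le_rfl))
  have hqsl : s < q.reverse.length := by
    rcases Nat.eq_or_lt_of_le (show s ≤ q.reverse.length by omega) with he | h
    · exfalso
      have h3 := Walk.getVert_length q.reverse
      rw [← he] at h3
      exact v_ne_Dmid hr1 hrd (hqs.symm.trans h3)
    · exact h
  have hqs1adj : (Gamma a b c d).Adj (Sum.inl 1) (q.reverse.getVert (s+1)) := by
    have h2 := q.reverse.adj_getVert_succ hqsl
    rwa [hqs] at h2
  have hback : q.reverse.getVert (s+1) ≠ q.reverse.getVert (s-1) :=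
    trail_not_backtrack hq.isTrail.reverse hs1 hqsl
  have hqsm1 : q.reverse.getVert (s-1) = Dp a b c d d := by
    have h2 := hqrv' (s-1) (by omega)
    rw [h2]; congr 1; omega
  have hfin : ∀ (ℓ : ℕ) (f : ℕ → GammaV a b c d), Br a b c d ℓ f → ℓ ≤ d →
      a + 1 ≤ ℓ → ℓ ≤ a + 2 →
      q.reverse.getVert (s+1) = f (ℓ-1) → False := by
    intro ℓ f hBr hℓd hℓ1 hℓ2 hval
    obtain ⟨hcl, hcu⟩ := cross hr1 hrd hBr hℓd hq.isTrail.reverse hqs hval (by omega)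
    rw [Walk.getVert_reverse] at hcu
    rw [Walk.length_reverse] at hcl
    refine conflict hlen hav (x := Sum.inl 0) hpu hcu ?_ ?_ ?_ ?_ ?_
    · rw [Walk.length_reverse] at hprl'; omega
    · omega
    · omega
    · omega
    · rw [Walk.length_reverse] at hprl'
      constructor <;> omega
  rcases (adj_v_iff hab hbc hcd _).mp hqs1adj with h|h|h|h
  · exact hfin (a+1) _ brA (by omega) (by omega) (by omega) (by rw [h]; all_goals (congr 1 <;> omega))
  · exact hfin (b+1) _ brB (by omega) (by omega) (by omega) (by rw [h]; all_goals (congr 1 <;> omega))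
  · exact hfin (c+1) _ brC (by omega) (by omega) (by omega) (by rw [h]; all_goals (congr 1 <;> omega))
  · exact hback (h.trans hqsm1.symm)

lemma B2 (hab : a ≤ b) (hbc : b ≤ c) (hcd : c ≤ d) (hc : c ≤ a + 1)
    (hd2 : a + 2 ≤ d) {r s : ℕ} (hr1 : 1 ≤ r) (hrd : r ≤ d) (hrs : r + s = d + 1)
    (hm1 : s + a + 1 ≤ r) (hm2 : r ≤ s + a + 2)
    {p q : (Gamma a b c d).Walk (Dp a b c d r) (Dp a b c d r)}
    (hp : p.IsEulerian) (hq : q.IsEulerian) (hav : Avoiding (Gamma a b c d) p q) :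
    False := by
  classical
  have hlen : p.length = q.length := eulerian_length_eq hp hq
  have hadj : (Gamma a b c d).Adj (Dp a b c d r) (Dp a b c d (r-1)) :=
    (adj_D_iff hr1 hrd _).mpr (Or.inl rfl)
  have hp0 : 0 < p.length := length_pos_of_eulerian hp hadj
  have hq0 : 0 < q.length := length_pos_of_eulerian hq hadj
  have hp1 : (Gamma a b c d).Adj (Dp a b c d r) (p.getVert 1) := by
    have h2 := p.adj_getVert_succ hp0
    rwa [Walk.getVert_zero] at h2
  have hq1 : (Gamma a b c d).Adj (Dp a b c d r) (q.getVert 1) := by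
    have h2 := q.adj_getVert_succ hq0
    rwa [Walk.getVert_zero] at h2
  have hplen2 : 2 ≤ p.length := two_le_length (by
    intro he
    exact (Gamma a b c d).irrefl (he ▸ hp1))
  have hqlen2 : 2 ≤ q.length := two_le_length (by
    intro he
    exact (Gamma a b c d).irrefl (he ▸ hq1))
  rcases (adj_D_iff hr1 hrd _).mp hp1 with h|h <;> rcases (adj_D_iff hr1 hrd _).mp hq1 with h'|h'
  · exact conflict hlen hav h h' le_rfl le_rfl (by omega) (by omega) (by omega)
  · exact B2core hab hbc hcd hc hd2 hr1 hrd hrs hm1 hm2 hq hp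
      (avoiding_symm hlen hav) h' h
  · exact B2core hab hbc hcd hc hd2 hr1 hrd hrs hm1 hm2 hp hq hav h h'
  · exact conflict hlen hav h h' le_rfl le_rfl (by omega) (by omega) (by omega)


lemma CycCore {d : ℕ} (hd : 1 ≤ d)
    {p q : (Gamma 0 0 0 d).Walk (Sum.inl 0) (Sum.inl 0)}
    (hp : p.IsEulerian) (hq : q.IsEulerian) (hav : Avoiding (Gamma 0 0 0 d) p q)
    (hp1 : p.getVert 1 = Dp 0 0 0 d 1) (hq1 : q.getVert 1 = Sum.inl 1) : False := by
  classical
  have hlen : p.length = q.length := eulerian_length_eq hp hq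
  have hu : ∀ y, (Gamma 0 0 0 d).Adj (Sum.inl 0) y → y = Sum.inl 1 ∨ y = Dp 0 0 0 d 1 := by
    intro y hy
    rcases (adj_u_iff (le_refl 0) (le_refl 0) (Nat.zero_le d) y).mp hy with h|h|h|h
    · left; rw [h, Ap_big (by omega)]
    · left; rw [h, Bp_big (by omega)]
    · left; rw [h, Cp_big (by omega)]
    · right; exact h
  have hv : ∀ y, (Gamma 0 0 0 d).Adj (Sum.inl 1) y → y = Sum.inl 0 ∨ y = Dp 0 0 0 d d := by
    intro y hy
    rcases (adj_v_iff (le_refl 0) (le_refl 0) (Nat.zero_le d) y).mp hy with h|h|h|h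
    · left; rw [h, Ap_zero]
    · left; rw [h, Bp_zero]
    · left; rw [h, Cp_zero]
    · right; exact h
  have corD : ∀ (pp : (Gamma 0 0 0 d).Walk (Sum.inl 0) (Sum.inl 0)), pp.IsTrail →
      pp.getVert 1 = Dp 0 0 0 d 1 →
      (d + 1 < pp.length ∧ ∀ k ≤ d + 1, pp.getVert k = Dp 0 0 0 d k) := by
    intro pp hppt hpp1
    have hlen1 : 1 ≤ pp.length := by
      by_contra hcon
      have h0 : pp.getVert 1 = Sum.inl 0 := pp.getVert_of_length_le (by omega)
      rw [hpp1] at h0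
      exact u_ne_Dmid le_rfl hd h0.symm
    obtain ⟨hle, hval⟩ := corridor hppt 0 (d+1) (Dp 0 0 0 d) (by omega)
      (by rw [Walk.getVert_zero, Dp_zero]) (by simpa using hpp1) (by simpa using hlen1)
      (fun k hk1 hk2 y => adj_D_iff hk1 (by omega) y)
      (fun k hk1 hk2 he => by
        rcases Nat.lt_or_ge k (d+1) with hlt | hge
        · exact u_ne_Dmid hk1 (by omega) he.symm
        · rw [Dp_big (by omega)] at he
          exact uv_ne he.symm)
    have hval' : ∀ k ≤ d+1, pp.getVert k = Dp 0 0 0 d k := fun k hk => by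
      simpa using hval k hk
    refine ⟨?_, hval'⟩
    rcases Nat.eq_or_lt_of_le (show d+1 ≤ pp.length by omega) with he | h
    · exfalso
      have h2 := hval' (d+1) le_rfl
      rw [Dp_big le_rfl, he, Walk.getVert_length] at h2
      exact uv_ne h2
    · exact h
  obtain ⟨hpl, hpv⟩ := corD p hp.isTrail hp1
  -- step at v and total length
  have hpv1 : p.getVert (d+1) = Sum.inl 1 := by
    rw [hpv (d+1) le_rfl, Dp_big le_rfl]
  have hnext : p.getVert (d+2) = Sum.inl 0 := by
    have hadj := p.adj_getVert_succ hpl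
    rw [hpv1] at hadj
    rcases hv _ hadj with h|h
    · exact h
    · exfalso
      have hbk := trail_not_backtrack hp.isTrail (show 1 ≤ d+1 by omega) hpl
      have hd' : p.getVert (d+1-1) = Dp 0 0 0 d d := by
        have h2 := hpv d (by omega)
        rw [show d+1-1 = d by omega]
        exact h2
      rw [show d+1+1 = d+2 by omega] at hbk
      exact hbk (h.trans hd'.symm)
  have hL : p.length = d + 2 := by
    by_contra hcon
    have hlt : d + 2 < p.length := by omega
    have hadj := p.adj_getVert_succ hlt
    rw [hnext] at hadj
    have hbk := trail_not_backtrack hp.isTrail (show 1 ≤ d+2 by omega) hlt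
    rw [show d+2+1 = d+3 by omega, show d+2-1 = d+1 by omega, hpv1] at hbk
    have h3 : p.getVert (d+3) = Dp 0 0 0 d 1 := by
      rcases hu _ hadj with h|h
      · exact absurd h hbk
      · exact h
    have hedge : s(p.getVert 0, p.getVert 1) = s(p.getVert (d+2), p.getVert (d+2+1)) := by
      rw [Walk.getVert_zero, hp1, hnext, show d+2+1 = d+3 by omega, h3]
    have := trail_edge_index_inj hp.isTrail (show 0 < p.length by omega) hlt hedge
    omega
  -- q reversed goes along D as well
  have hq2 : 2 ≤ q.length := two_le_length (by rw [hq1]; exact uv_ne.symm)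
  have hqrev1 : q.reverse.getVert 1 = Dp 0 0 0 d 1 := by
    have hrl : 0 < q.reverse.length := by rw [Walk.length_reverse]; omega
    have hadj := q.reverse.adj_getVert_succ hrl
    rw [Walk.getVert_zero] at hadj
    rcases hu _ hadj with h|h
    · exact absurd (h.trans hq1.symm) (rev_one_ne hq.isTrail hq2)
    · exact h
  obtain ⟨hql, hqv⟩ := corD q.reverse hq.isTrail.reverse hqrev1
  -- the meeting point
  have hqL : q.length = d + 2 := by omega
  set t := (d+2)/2 with ht
  have hpt : p.getVert t = Dp 0 0 0 d t := hpv t (by omega)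
  have hqt : q.getVert t = Dp 0 0 0 d (d+2-t) := by
    have h2 := hqv (d+2-t) (by omega)
    rw [Walk.getVert_reverse] at h2
    rw [show q.length - (d+2-t) = t by omega] at h2
    exact h2
  obtain ⟨hne, hna⟩ := hav t (by omega) (by omega)
  by_cases hteq : t = d+2-t
  · exact hne (by rw [hpt, hqt, ← hteq])
  · have hk : d+2-t = t+1 := by omega
    refine hna ?_
    rw [hpt, hqt, hk]
    exact (adj_D_iff (by omega) (by omega) _).mpr (Or.inr rfl)

lemma Cyc {d : ℕ} (hd : 1 ≤ d)
    {p q : (Gamma 0 0 0 d).Walk (Sum.inl 0) (Sum.inl 0)}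
    (hp : p.IsEulerian) (hq : q.IsEulerian) (hav : Avoiding (Gamma 0 0 0 d) p q) :
    False := by
  classical
  have hlen : p.length = q.length := eulerian_length_eq hp hq
  have hu : ∀ y, (Gamma 0 0 0 d).Adj (Sum.inl 0) y → y = Sum.inl 1 ∨ y = Dp 0 0 0 d 1 := by
    intro y hy
    rcases (adj_u_iff (le_refl 0) (le_refl 0) (Nat.zero_le d) y).mp hy with h|h|h|h
    · left; rw [h, Ap_big (by omega)]
    · left; rw [h, Bp_big (by omega)]
    · left; rw [h, Cp_big (by omega)]
    · right; exact h
  have hadj : (Gamma 0 0 0 d).Adj (Sum.inl 0) (Dp 0 0 0 d 1) :=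
    (adj_u_iff (le_refl 0) (le_refl 0) (Nat.zero_le d) _).mpr
      (Or.inr (Or.inr (Or.inr rfl)))
  have hp0 : 0 < p.length := length_pos_of_eulerian hp hadj
  have hq0 : 0 < q.length := length_pos_of_eulerian hq hadj
  have hp1 : (Gamma 0 0 0 d).Adj (Sum.inl 0) (p.getVert 1) := by
    have h2 := p.adj_getVert_succ hp0
    rwa [Walk.getVert_zero] at h2
  have hq1 : (Gamma 0 0 0 d).Adj (Sum.inl 0) (q.getVert 1) := by
    have h2 := q.adj_getVert_succ hq0
    rwa [Walk.getVert_zero] at h2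
  have hplen2 : 2 ≤ p.length := two_le_length (by
    intro he
    exact (Gamma 0 0 0 d).irrefl (he ▸ hp1))
  have hqlen2 : 2 ≤ q.length := two_le_length (by
    intro he
    exact (Gamma 0 0 0 d).irrefl (he ▸ hq1))
  rcases hu _ hp1 with h|h <;> rcases hu _ hq1 with h'|h'
  · exact conflict hlen hav h h' le_rfl le_rfl (by omega) (by omega) (by omega)
  · exact CycCore hd hq hp (avoiding_symm hlen hav) h' h
  · exact CycCore hd hp hq hav h h'
  · exact conflict hlen hav h h' le_rfl le_rfl (by omega) (by omega) (by omega)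

lemma deg_odd (hab : a ≤ b) (hbc : b ≤ c) (hcd : c ≤ d) (hb0 : b = 0)
    (hsp : (c = 1 ∧ 1 ≤ d) ∨ (c = 0 ∧ d = 0))
    {p : (Gamma a b c d).Walk (Sum.inl 0) (Sum.inl 0)} (hp : p.IsEulerian) : False := by
  classical
  have ha0 : a = 0 := by omega
  letI : DecidableRel (Gamma a b c d).Adj := Classical.decRel _
  have hEv : Even ((Gamma a b c d).degree (Sum.inl 0)) :=
    hp.even_degree_iff.mpr (fun h => absurd rfl h)
  rcases hsp with ⟨hc1, hd1⟩ | ⟨hc0, hd0⟩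
  · have hnb : (Gamma a b c d).neighborFinset (Sum.inl 0) =
        {Sum.inl 1, Cp a b c d 1, Dp a b c d 1} := by
      ext y
      rw [SimpleGraph.mem_neighborFinset, adj_u_iff hab hbc hcd, Ap_big (by omega),
        Bp_big (by omega)]
      simp only [Finset.mem_insert, Finset.mem_singleton]
      tauto
    have hcard : (Gamma a b c d).degree (Sum.inl 0) = 3 := by
      rw [SimpleGraph.degree, hnb]
      rw [Finset.card_insert_of_notMem, Finset.card_insert_of_notMem,
        Finset.card_singleton]
      · rw [Cp_mid le_rfl (by omega)]
        simp only [Finset.mem_singleton]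
        rw [Dp_mid le_rfl (by omega)]
        simp
      · rw [Cp_mid le_rfl (by omega), Dp_mid le_rfl (by omega)]
        simp
    rw [hcard, Nat.even_iff] at hEv
    omega
  · have hnb : (Gamma a b c d).neighborFinset (Sum.inl 0) = {Sum.inl 1} := by
      ext y
      rw [SimpleGraph.mem_neighborFinset, adj_u_iff hab hbc hcd, Ap_big (by omega),
        Bp_big (by omega), Cp_big (by omega), Dp_big (by omega)]
      simp only [Finset.mem_singleton]
      tauto
    have hcard : (Gamma a b c d).degree (Sum.inl 0) = 1 := by
      rw [SimpleGraph.degree, hnb, Finset.card_singleton]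
    rw [hcard, Nat.even_iff] at hEv
    omega

end GammaAux

/-- If `c ≤ a + 1` then `Γ(a,b,c,d)` is not doubly Eulerian. -/
theorem Gamma_not_doublyEulerian_of_small_c
    (a b c d : ℕ) (hab : a ≤ b) (hbc : b ≤ c) (hcd : c ≤ d) (hc : c ≤ a + 1) :
    ¬ DoublyEulerian (Gamma a b c d) := by
  intro h
  by_cases hb : 1 ≤ b
  · by_cases hdle : d ≤ a + 1
    · obtain ⟨p, q, hp, hq, hav⟩ := h (Sum.inl 0)
      exact GammaAux.B1 hab hbc hcd hc hb hdle hp hq hav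
    · have hd2 : a + 2 ≤ d := by omega
      obtain ⟨r, s, hr1, hrd, hrs, hm1, hm2⟩ :
          ∃ r s, 1 ≤ r ∧ r ≤ d ∧ r + s = d + 1 ∧ s + a + 1 ≤ r ∧ r ≤ s + a + 2 := by
        refine ⟨(d + 1 + (a + 1 + ((d + a) % 2))) / 2,
          d + 1 - (d + 1 + (a + 1 + ((d + a) % 2))) / 2, ?_, ?_, ?_, ?_, ?_⟩ <;> omega
      obtain ⟨p, q, hp, hq, hav⟩ := h (GammaAux.Dp a b c d r)
      exact GammaAux.B2 hab hbc hcd hc hd2 hr1 hrd hrs hm1 hm2 hp hq hav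
  · have hb0 : b = 0 := by omega
    have ha0 : a = 0 := by omega
    by_cases hc1 : 1 ≤ c
    · obtain ⟨p, _, hp, _, _⟩ := h (Sum.inl 0)
      exact GammaAux.deg_odd hab hbc hcd hb0 (Or.inl ⟨by omega, by omega⟩) hp
    · have hc0 : c = 0 := by omega
      by_cases hd1 : 1 ≤ d
      · subst ha0 hb0 hc0
        obtain ⟨p, q, hp, hq, hav⟩ := h (Sum.inl 0)
        exact GammaAux.Cyc hd1 hp hq hav
      · obtain ⟨p, _, hp, _, _⟩ := h (Sum.inl 0)
        exact GammaAux.deg_odd hab hbc hcd hb0 (Or.inr ⟨by omega, by omega⟩) hp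
end

section
/- If Γ(0,b,c,d) is not bipartite, then Γ is not doubly Eulerian: taking a path X among B, C, D with an odd number of internal vertices, two Eulerian circuits starting at the middle internal vertex of X in opposite directions arrive at the adjacent vertices u and v simultaneously. -/
open SimpleGraph

section Helpers
open SimpleGraph

lemma Walk.edges_get' {V : Type*} {G : SimpleGraph V} {a b : V} (p : G.Walk a b) :
    ∀ (i : ℕ) (h : i < p.edges.length),
      p.edges.get ⟨i, h⟩ = s(p.getVert i, p.getVert (i+1)) := by
  induction p with
  | nil => intro i h; simp at h
  | cons hadj q ih =>
    intro i h
    cases i with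
    | zero => simp [SimpleGraph.Walk.edges_cons, SimpleGraph.Walk.getVert]
    | succ n =>
      simp only [SimpleGraph.Walk.edges_cons, List.get_cons_succ,
        SimpleGraph.Walk.getVert_cons_succ]
      exact ih n _

lemma trail_no_backtrack {V : Type*} {G : SimpleGraph V} {a b : V} {p : G.Walk a b}
    (hp : p.IsTrail) {t : ℕ} (ht1 : 1 ≤ t) (ht : t < p.length) :
    p.getVert (t+1) ≠ p.getVert (t-1) := by
  intro heq
  have hlen : p.edges.length = p.length := p.length_edges
  have h1 : t - 1 < p.edges.length := by omega
  have h2 : t < p.edges.length := by omega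
  have e1 := Walk.edges_get' p (t-1) h1
  have e2 := Walk.edges_get' p t h2
  rw [show t - 1 + 1 = t by omega] at e1
  have : p.edges.get ⟨t-1, h1⟩ = p.edges.get ⟨t, h2⟩ := by
    rw [e1, e2, heq, Sym2.eq_swap]
  have := hp.edges_nodup.get_inj_iff.mp this
  simp at this; omega

lemma reach_uv {V : Type*} {G : SimpleGraph V}
    (u v : V) (k j : ℕ) (hk : k = 2*j+1)
    (emb : ℕ → V)
    (hinj : ∀ i₁ i₂, i₁ < k → i₂ < k → emb i₁ = emb i₂ → i₁ = i₂)
    (hu : ∀ i, i < k → emb i ≠ u) (hv : ∀ i, i < k → emb i ≠ v)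
    (hadj : ∀ i, i < k → ∀ y, G.Adj (emb i) y ↔
      (y = if i = 0 then u else emb (i-1)) ∨ (y = if i = k-1 then v else emb (i+1)))
    (p : G.Walk (emb j) (emb j)) (hp : p.IsTrail) (hlen : 0 < p.length) :
    j + 1 < p.length ∧ (p.getVert (j+1) = u ∨ p.getVert (j+1) = v) := by
  have hjk : j < k := by omega
  have hgv0 : p.getVert 0 = emb j := p.getVert_zero
  have main : ∀ t, t ≤ j →
      (∀ r ≤ t, p.getVert r = emb (j + r)) ∨ (∀ r ≤ t, p.getVert r = emb (j - r)) := by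
    intro t
    induction t with
    | zero =>
      intro _
      left; intro r hr
      have : r = 0 := by omega
      subst this
      rw [hgv0]; exact congrArg emb (by omega)
    | succ n ih =>
      intro hn
      have hn' : n ≤ j := by omega
      have hj1 : 1 ≤ j := by omega
      obtain H | H := ih hn'
      · have hcur : p.getVert n = emb (j + n) := H n le_rfl
        have hpos : n < p.length := by
          by_contra hcon
          push_neg at hcon
          have h2 := p.getVert_of_length_le hcon
          rw [hcur] at h2
          have := hinj _ _ (by omega) hjk h2
          omega
        have hstep := p.adj_getVert_succ hpos
        rw [hcur, hadj _ (by omega)] at hstep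
        rw [if_neg (by omega), if_neg (by omega)] at hstep
        obtain h | h := hstep
        · cases n with
          | zero =>
            right; intro r hr
            interval_cases r
            · rw [hgv0]; exact congrArg emb (by omega)
            · rw [h]; exact congrArg emb (by omega)
          | succ m =>
            exfalso
            apply trail_no_backtrack hp (show 1 ≤ m + 1 by omega) hpos
            simp only [Nat.add_sub_cancel]
            rw [h, H m (by omega)]
            exact congrArg emb (by omega)
        · left; intro r hr
          rcases Nat.lt_or_ge r (n+1) with h' | h'
          · exact H r (by omega)
          · have : r = n + 1 := by omega
            subst this
            rw [h]; exact congrArg emb (by omega)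
      · have hcur : p.getVert n = emb (j - n) := H n le_rfl
        have hpos : n < p.length := by
          by_contra hcon
          push_neg at hcon
          have h2 := p.getVert_of_length_le hcon
          rw [hcur] at h2
          have := hinj _ _ (by omega) hjk h2
          omega
        have hstep := p.adj_getVert_succ hpos
        rw [hcur, hadj _ (by omega)] at hstep
        rw [if_neg (by omega), if_neg (by omega)] at hstep
        obtain h | h := hstep
        · right; intro r hr
          rcases Nat.lt_or_ge r (n+1) with h' | h'
          · exact H r (by omega)
          · have : r = n + 1 := by omega
            subst this
            rw [h]; exact congrArg emb (by omega)
        · cases n with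
          | zero =>
            left; intro r hr
            interval_cases r
            · rw [hgv0]; exact congrArg emb (by omega)
            · rw [h]; exact congrArg emb (by omega)
          | succ m =>
            exfalso
            apply trail_no_backtrack hp (show 1 ≤ m + 1 by omega) hpos
            simp only [Nat.add_sub_cancel]
            rw [h, H m (by omega)]
            exact congrArg emb (by omega)
  have hfin : p.getVert (j+1) = u ∨ p.getVert (j+1) = v := by
    by_cases hj0 : j = 0
    · subst hj0
      have hstep := p.adj_getVert_succ hlen
      rw [hgv0, hadj 0 (by omega)] at hstep
      rw [if_pos rfl, if_pos (by omega)] at hstep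
      tauto
    · obtain H | H := main j le_rfl
      · have hcur : p.getVert j = emb (j + j) := H j le_rfl
        have hpos : j < p.length := by
          by_contra hcon
          push_neg at hcon
          have h2 := p.getVert_of_length_le hcon
          rw [hcur] at h2
          have := hinj _ _ (by omega) hjk h2
          omega
        have hstep := p.adj_getVert_succ hpos
        rw [hcur, hadj _ (by omega)] at hstep
        rw [if_neg (by omega), if_pos (by omega)] at hstep
        obtain h | h := hstep
        · exfalso
          apply trail_no_backtrack hp (show 1 ≤ j by omega) hpos
          rw [h, H (j-1) (by omega)]
          exact congrArg emb (by omega)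
        · right; exact h
      · have hcur : p.getVert j = emb 0 := by
          rw [H j le_rfl]; exact congrArg emb (by omega)
        have hpos : j < p.length := by
          by_contra hcon
          push_neg at hcon
          have h2 := p.getVert_of_length_le hcon
          rw [hcur] at h2
          have := hinj _ _ (by omega) hjk h2
          omega
        have hstep := p.adj_getVert_succ hpos
        rw [hcur, hadj 0 (by omega)] at hstep
        rw [if_pos rfl, if_neg (by omega)] at hstep
        obtain h | h := hstep
        · left; exact h
        · exfalso
          apply trail_no_backtrack hp (show 1 ≤ j by omega) hpos
          rw [h, H (j-1) (by omega)]
          exact congrArg emb (by omega)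
  refine ⟨?_, hfin⟩
  have hend : p.getVert p.length = emb j := p.getVert_length
  have hne : j + 1 ≠ p.length := by
    intro hcon
    rw [hcon, hend] at hfin
    rcases hfin with h | h
    · exact hu j hjk h
    · exact hv j hjk h
  by_contra hcon
  push_neg at hcon
  have hle : p.length ≤ j := by omega
  obtain H | H := main p.length hle
  · have h2 := H p.length le_rfl
    rw [hend] at h2
    have := hinj _ _ hjk (by omega) h2
    omega
  · have h2 := H p.length le_rfl
    rw [hend] at h2
    have := hinj _ _ hjk (by omega) h2
    omega

lemma no_pair {V : Type*} [DecidableEq V] {G : SimpleGraph V} {u v : V} (huv : G.Adj u v)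
    (k j : ℕ) (hk : k = 2*j+1) (emb : ℕ → V)
    (hinj : ∀ i₁ i₂, i₁ < k → i₂ < k → emb i₁ = emb i₂ → i₁ = i₂)
    (hu : ∀ i, i < k → emb i ≠ u) (hv : ∀ i, i < k → emb i ≠ v)
    (hadj : ∀ i, i < k → ∀ y, G.Adj (emb i) y ↔
      (y = if i = 0 then u else emb (i-1)) ∨ (y = if i = k-1 then v else emb (i+1))) :
    ¬ ∃ p q : G.Walk (emb j) (emb j), p.IsEulerian ∧ q.IsEulerian ∧ Avoiding G p q := by
  rintro ⟨p, q, hp, hq, hav⟩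
  have hmem : s(u, v) ∈ G.edgeSet := huv
  have hpl : 0 < p.length := by
    have := hp.mem_edges_iff.mpr hmem
    have hne : p.edges ≠ [] := List.ne_nil_of_mem this
    have := p.length_edges
    cases hl : p.edges with
    | nil => exact absurd hl hne
    | cons x xs => rw [← this, hl]; simp
  have hql : 0 < q.length := by
    have := hq.mem_edges_iff.mpr hmem
    have hne : q.edges ≠ [] := List.ne_nil_of_mem this
    have := q.length_edges
    cases hl : q.edges with
    | nil => exact absurd hl hne
    | cons x xs => rw [← this, hl]; simp
  obtain ⟨hplen, hpuv⟩ := reach_uv u v k j hk emb hinj hu hv hadj p hp.isTrail hpl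
  obtain ⟨hqlen, hquv⟩ := reach_uv u v k j hk emb hinj hu hv hadj q hq.isTrail hql
  obtain ⟨hne, hnadj⟩ := hav (j+1) (by omega) hplen
  rcases hpuv with h1 | h1 <;> rcases hquv with h2 | h2 <;> rw [h1, h2] at hne hnadj
  · exact hne rfl
  · exact hnadj huv
  · exact hnadj huv.symm
  · exact hne rfl

end Helpers
section
open SimpleGraph
variable {b c d : ℕ}

/-- internal vertices of the B-path, as a total function on `ℕ`. -/
def embB (b c d : ℕ) (i : ℕ) : GammaV 0 b c d :=
  if h : i < b then Sum.inr (Sum.inr (Sum.inl ⟨i, h⟩)) else Sum.inl 0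

lemma adjB (i : ℕ) (hi : i < b) (y : GammaV 0 b c d) :
    (Gamma 0 b c d).Adj (embB b c d i) y ↔
      (y = if i = 0 then Sum.inl 0 else embB b c d (i-1)) ∨
      (y = if i = b - 1 then Sum.inl 1 else embB b c d (i+1)) := by
  rw [show embB b c d i = Sum.inr (Sum.inr (Sum.inl ⟨i, hi⟩)) from dif_pos hi]
  rw [Gamma, fromRel_adj]
  simp only [pathRel, Fin.exists_iff, Fin.ext_iff, Sum.inr.injEq, Sum.inl.injEq, reduceCtorEq,
    and_false, false_and, exists_false, false_or, or_false, exists_and_left]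
  constructor
  · rintro ⟨hne, (⟨i1, hi1, i2, hi2eq, hieq, hi2lt, hy⟩ | ⟨i1, h1eq, hieq, _, hy⟩) |
      (⟨i1, h1eq, hy, _, hieq⟩ | ⟨i1, hi1, i2, hi2eq, hy, hi2lt, hieq⟩)⟩
    · right
      rw [if_neg (show ¬ i = b - 1 by omega),
        show embB b c d (i+1) = Sum.inr (Sum.inr (Sum.inl ⟨i+1, by omega⟩)) from dif_pos (by omega)]
      subst hy
      simp only [Sum.inr.injEq, Sum.inl.injEq, Fin.ext_iff]
      omega
    · right
      rw [if_pos (show i = b - 1 by omega)]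
      exact hy
    · left
      rw [if_pos (show i = 0 by omega)]
      exact hy
    · left
      rw [if_neg (show ¬ i = 0 by omega),
        show embB b c d (i-1) = Sum.inr (Sum.inr (Sum.inl ⟨i-1, by omega⟩)) from dif_pos (by omega)]
      subst hy
      simp only [Sum.inr.injEq, Sum.inl.injEq, Fin.ext_iff]
      omega
  · rintro (hy | hy)
    · by_cases h0 : i = 0
      · rw [if_pos h0] at hy
        subst hy
        exact ⟨by simp, Or.inr (Or.inl ⟨0, rfl, rfl, by omega, by omega⟩)⟩
      · rw [if_neg h0,
          show embB b c d (i-1) = Sum.inr (Sum.inr (Sum.inl ⟨i-1, by omega⟩)) from dif_pos (by omega)] at hy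
        subst hy
        refine ⟨?_, Or.inr (Or.inr ⟨i - 1, by omega, i, by omega, ?_, hi, by omega⟩)⟩
        · simp only [ne_eq, Sum.inr.injEq, Sum.inl.injEq, Fin.ext_iff]
          try omega
        · simp only [Sum.inr.injEq, Sum.inl.injEq, Fin.ext_iff]
          try omega
    · by_cases h0 : i = b - 1
      · rw [if_pos h0] at hy
        subst hy
        exact ⟨by simp, Or.inl (Or.inr ⟨b - 1, rfl, by omega, by omega, rfl⟩)⟩
      · rw [if_neg h0,
          show embB b c d (i+1) = Sum.inr (Sum.inr (Sum.inl ⟨i+1, by omega⟩)) from dif_pos (by omega)] at hy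
        subst hy
        refine ⟨?_, Or.inl (Or.inl ⟨i, hi, i + 1, rfl, by omega, by omega, ?_⟩)⟩
        · simp only [ne_eq, Sum.inr.injEq, Sum.inl.injEq, Fin.ext_iff]
          try omega
        · simp only [Sum.inr.injEq, Sum.inl.injEq, Fin.ext_iff]
          try omega

/-- internal vertices of the C-path, as a total function on `ℕ`. -/
def embC (b c d : ℕ) (i : ℕ) : GammaV 0 b c d :=
  if h : i < c then Sum.inr (Sum.inr (Sum.inr (Sum.inl ⟨i, h⟩))) else Sum.inl 0

lemma adjC (i : ℕ) (hi : i < c) (y : GammaV 0 b c d) :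
    (Gamma 0 b c d).Adj (embC b c d i) y ↔
      (y = if i = 0 then Sum.inl 0 else embC b c d (i-1)) ∨
      (y = if i = c - 1 then Sum.inl 1 else embC b c d (i+1)) := by
  rw [show embC b c d i = Sum.inr (Sum.inr (Sum.inr (Sum.inl ⟨i, hi⟩))) from dif_pos hi]
  rw [Gamma, fromRel_adj]
  simp only [pathRel, Fin.exists_iff, Fin.ext_iff, Sum.inr.injEq, Sum.inl.injEq, reduceCtorEq,
    and_false, false_and, exists_false, false_or, or_false, exists_and_left]
  constructor
  · rintro ⟨hne, (⟨i1, hi1, i2, hi2eq, hieq, hi2lt, hy⟩ | ⟨i1, h1eq, hieq, _, hy⟩) |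
      (⟨i1, h1eq, hy, _, hieq⟩ | ⟨i1, hi1, i2, hi2eq, hy, hi2lt, hieq⟩)⟩
    · right
      rw [if_neg (show ¬ i = c - 1 by omega),
        show embC b c d (i+1) = Sum.inr (Sum.inr (Sum.inr (Sum.inl ⟨i+1, by omega⟩))) from dif_pos (by omega)]
      subst hy
      simp only [Sum.inr.injEq, Sum.inl.injEq, Fin.ext_iff]
      omega
    · right
      rw [if_pos (show i = c - 1 by omega)]
      exact hy
    · left
      rw [if_pos (show i = 0 by omega)]
      exact hy
    · left
      rw [if_neg (show ¬ i = 0 by omega),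
        show embC b c d (i-1) = Sum.inr (Sum.inr (Sum.inr (Sum.inl ⟨i-1, by omega⟩))) from dif_pos (by omega)]
      subst hy
      simp only [Sum.inr.injEq, Sum.inl.injEq, Fin.ext_iff]
      omega
  · rintro (hy | hy)
    · by_cases h0 : i = 0
      · rw [if_pos h0] at hy
        subst hy
        exact ⟨by simp, Or.inr (Or.inl ⟨0, rfl, rfl, by omega, by omega⟩)⟩
      · rw [if_neg h0,
          show embC b c d (i-1) = Sum.inr (Sum.inr (Sum.inr (Sum.inl ⟨i-1, by omega⟩))) from dif_pos (by omega)] at hy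
        subst hy
        refine ⟨?_, Or.inr (Or.inr ⟨i - 1, by omega, i, by omega, ?_, hi, by omega⟩)⟩
        · simp only [ne_eq, Sum.inr.injEq, Sum.inl.injEq, Fin.ext_iff]
          try omega
        · simp only [Sum.inr.injEq, Sum.inl.injEq, Fin.ext_iff]
          try omega
    · by_cases h0 : i = c - 1
      · rw [if_pos h0] at hy
        subst hy
        exact ⟨by simp, Or.inl (Or.inr ⟨c - 1, rfl, by omega, by omega, rfl⟩)⟩
      · rw [if_neg h0,
          show embC b c d (i+1) = Sum.inr (Sum.inr (Sum.inr (Sum.inl ⟨i+1, by omega⟩))) from dif_pos (by omega)] at hy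
        subst hy
        refine ⟨?_, Or.inl (Or.inl ⟨i, hi, i + 1, rfl, by omega, by omega, ?_⟩)⟩
        · simp only [ne_eq, Sum.inr.injEq, Sum.inl.injEq, Fin.ext_iff]
          try omega
        · simp only [Sum.inr.injEq, Sum.inl.injEq, Fin.ext_iff]
          try omega

/-- internal vertices of the D-path, as a total function on `ℕ`. -/
def embD (b c d : ℕ) (i : ℕ) : GammaV 0 b c d :=
  if h : i < d then Sum.inr (Sum.inr (Sum.inr (Sum.inr ⟨i, h⟩))) else Sum.inl 0

lemma adjD (i : ℕ) (hi : i < d) (y : GammaV 0 b c d) :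
    (Gamma 0 b c d).Adj (embD b c d i) y ↔
      (y = if i = 0 then Sum.inl 0 else embD b c d (i-1)) ∨
      (y = if i = d - 1 then Sum.inl 1 else embD b c d (i+1)) := by
  rw [show embD b c d i = Sum.inr (Sum.inr (Sum.inr (Sum.inr ⟨i, hi⟩))) from dif_pos hi]
  rw [Gamma, fromRel_adj]
  simp only [pathRel, Fin.exists_iff, Fin.ext_iff, Sum.inr.injEq, Sum.inl.injEq, reduceCtorEq,
    and_false, false_and, exists_false, false_or, or_false, exists_and_left]
  constructor
  · rintro ⟨hne, (⟨i1, hi1, i2, hi2eq, hieq, hi2lt, hy⟩ | ⟨i1, h1eq, hieq, _, hy⟩) |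
      (⟨i1, h1eq, hy, _, hieq⟩ | ⟨i1, hi1, i2, hi2eq, hy, hi2lt, hieq⟩)⟩
    · right
      rw [if_neg (show ¬ i = d - 1 by omega),
        show embD b c d (i+1) = Sum.inr (Sum.inr (Sum.inr (Sum.inr ⟨i+1, by omega⟩))) from dif_pos (by omega)]
      subst hy
      simp only [Sum.inr.injEq, Sum.inl.injEq, Fin.ext_iff]
      omega
    · right
      rw [if_pos (show i = d - 1 by omega)]
      exact hy
    · left
      rw [if_pos (show i = 0 by omega)]
      exact hy
    · left
      rw [if_neg (show ¬ i = 0 by omega),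
        show embD b c d (i-1) = Sum.inr (Sum.inr (Sum.inr (Sum.inr ⟨i-1, by omega⟩))) from dif_pos (by omega)]
      subst hy
      simp only [Sum.inr.injEq, Sum.inl.injEq, Fin.ext_iff]
      omega
  · rintro (hy | hy)
    · by_cases h0 : i = 0
      · rw [if_pos h0] at hy
        subst hy
        exact ⟨by simp, Or.inr (Or.inl ⟨0, rfl, rfl, by omega, by omega⟩)⟩
      · rw [if_neg h0,
          show embD b c d (i-1) = Sum.inr (Sum.inr (Sum.inr (Sum.inr ⟨i-1, by omega⟩))) from dif_pos (by omega)] at hy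
        subst hy
        refine ⟨?_, Or.inr (Or.inr ⟨i - 1, by omega, i, by omega, ?_, hi, by omega⟩)⟩
        · simp only [ne_eq, Sum.inr.injEq, Sum.inl.injEq, Fin.ext_iff]
          try omega
        · simp only [Sum.inr.injEq, Sum.inl.injEq, Fin.ext_iff]
          try omega
    · by_cases h0 : i = d - 1
      · rw [if_pos h0] at hy
        subst hy
        exact ⟨by simp, Or.inl (Or.inr ⟨d - 1, rfl, by omega, by omega, rfl⟩)⟩
      · rw [if_neg h0,
          show embD b c d (i+1) = Sum.inr (Sum.inr (Sum.inr (Sum.inr ⟨i+1, by omega⟩))) from dif_pos (by omega)] at hy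
        subst hy
        refine ⟨?_, Or.inl (Or.inl ⟨i, hi, i + 1, rfl, by omega, by omega, ?_⟩)⟩
        · simp only [ne_eq, Sum.inr.injEq, Sum.inl.injEq, Fin.ext_iff]
          try omega
        · simp only [Sum.inr.injEq, Sum.inl.injEq, Fin.ext_iff]
          try omega

end

/-- If `Γ(0,b,c,d)` is not bipartite (i.e. not all of `b`, `c`, `d` are even),
then it is not doubly Eulerian. -/
theorem Gamma_a0_not_bipartite_not_doublyEulerian
    (b c d : ℕ) (hbc : b ≤ c) (hcd : c ≤ d)
    (hodd : ¬ (Even b ∧ Even c ∧ Even d)) :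
    ¬ DoublyEulerian (Gamma 0 b c d) := by
  intro hDE
  have huv : (Gamma 0 b c d).Adj (Sum.inl 0) (Sum.inl 1) := by
    rw [Gamma, fromRel_adj]
    exact ⟨by simp [Fin.ext_iff], Or.inl (Or.inl ⟨rfl, rfl, Or.inl rfl⟩)⟩
  by_cases hb : Even b
  · by_cases hc : Even c
    · have hd : ¬ Even d := by tauto
      obtain ⟨j, hj⟩ := Nat.not_even_iff_odd.mp hd
      exact no_pair huv d j (by omega) (embD b c d)
        (fun i1 i2 h1 h2 h => by
          rw [show embD b c d i1 = _ from dif_pos h1,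
            show embD b c d i2 = _ from dif_pos h2] at h
          simpa [Fin.ext_iff] using h)
        (fun i hi => by rw [show embD b c d i = _ from dif_pos hi]; simp)
        (fun i hi => by rw [show embD b c d i = _ from dif_pos hi]; simp)
        (fun i hi y => adjD i hi y)
        (hDE (embD b c d j))
    · obtain ⟨j, hj⟩ := Nat.not_even_iff_odd.mp hc
      exact no_pair huv c j (by omega) (embC b c d)
        (fun i1 i2 h1 h2 h => by
          rw [show embC b c d i1 = _ from dif_pos h1,
            show embC b c d i2 = _ from dif_pos h2] at h
          simpa [Fin.ext_iff] using h)
        (fun i hi => by rw [show embC b c d i = _ from dif_pos hi]; simp)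
        (fun i hi => by rw [show embC b c d i = _ from dif_pos hi]; simp)
        (fun i hi y => adjC i hi y)
        (hDE (embC b c d j))
  · obtain ⟨j, hj⟩ := Nat.not_even_iff_odd.mp hb
    exact no_pair huv b j (by omega) (embB b c d)
      (fun i1 i2 h1 h2 h => by
        rw [show embB b c d i1 = _ from dif_pos h1,
          show embB b c d i2 = _ from dif_pos h2] at h
        simpa [Fin.ext_iff] using h)
      (fun i hi => by rw [show embB b c d i = _ from dif_pos hi]; simp)
      (fun i hi => by rw [show embB b c d i = _ from dif_pos hi]; simp)
      (fun i hi y => adjB i hi y)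
      (hDE (embB b c d j))
end
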